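/- arXiv:1710.06129 — 4 statements merged into one kernel-verified Lean document; each statement's English description precedes it below -/
import Mathlib

section
/- Let Δ be a simplicial complex of dimension d−1. Then for all i and all j with 1 ≤ j ≤ d and i + j > d, the reduced homology H̃_i(N_j(Δ)) vanishes. -/
set_option autoImplicit false
set_option maxHeartbeats 1000000
set_option synthInstance.maxHeartbeats 400000

/-- A (finite-vertex) abstract simplicial complex on vertex type `V`,
containing the empty face and closed under taking subsets. -/
structure SComplex (V : Type) where
  faces : Set (Finset V)
  empty_mem : ∅ ∈ faces
  down_closed : ∀ {s t : Finset V}, s ∈ faces → t ⊆ s → t ∈ faces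

namespace SComplex

variable {V : Type}

/-- A facet is a maximal face. -/
def IsFacet (K : SComplex V) (s : Finset V) : Prop :=
  s ∈ K.faces ∧ ∀ t ∈ K.faces, s ⊆ t → t = s

/-- The induced subcomplex `Δ|_W` on a set `W` of vertices. -/
def restrict (K : SComplex V) (W : Set V) : SComplex V where
  faces := {s | s ∈ K.faces ∧ ↑s ⊆ W}
  empty_mem := ⟨K.empty_mem, by simp⟩
  down_closed := fun hs hts =>
    ⟨K.down_closed hs.1 hts, (Finset.coe_subset.mpr hts).trans hs.2⟩

/-- The link `lk_Δ(T)`.  (When `T` is a face this agrees with the usual link;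
the empty face is always included.) -/
def link [DecidableEq V] (K : SComplex V) (T : Finset V) : SComplex V where
  faces := {G | G = ∅ ∨ (Disjoint T G ∧ T ∪ G ∈ K.faces)}
  empty_mem := Or.inl rfl
  down_closed := by
    rintro s t (rfl | ⟨h1, h2⟩) hts
    · exact Or.inl (Finset.subset_empty.mp hts)
    · exact Or.inr ⟨h1.mono_right (Finset.coe_subset.mpr hts : _),
        K.down_closed h2 (Finset.union_subset_union_right hts)⟩

/-- `[Δ]_{>j}` : the order complex of the poset of faces of `Δ` of cardinality
strictly greater than `j`; its faces are the chains of such faces. -/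
def orderComplex (K : SComplex V) (j : ℕ) : SComplex (Finset V) where
  faces := {C | (∀ s ∈ C, s ∈ K.faces ∧ j < s.card) ∧
    ∀ s ∈ C, ∀ t ∈ C, s ⊆ t ∨ t ⊆ s}
  empty_mem := by simp
  down_closed := fun h hts =>
    ⟨fun s hs => h.1 s (hts hs), fun s hs t ht => h.2 s (hts hs) t (hts ht)⟩

/-- The `i`-th nerve complex of the family of sets `A 1, …, A r`:
faces are the sets of indices whose members intersect in at least `i` vertices. -/
def nerve [DecidableEq V] {r : ℕ} (A : Fin r → Finset V) (i : ℕ) :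
    SComplex (Fin r) where
  faces := {F | ∀ hF : F.Nonempty, i ≤ (F.inf' hF A).card}
  empty_mem := fun hF => absurd hF (by simp)
  down_closed := by
    intro s t hs hts ht
    have h1 : s.Nonempty := ht.mono hts
    have h2 : s.inf' h1 A ⊆ t.inf' ht A :=
      Finset.le_inf' ht _ fun b hb => Finset.inf'_le _ (hts hb)
    exact le_trans (hs h1) (Finset.card_le_card h2)

/-- `A` enumerates (without repetition) the facets of `K`. -/
def FacetEnum (K : SComplex V) {r : ℕ} (A : Fin r → Finset V) : Prop :=
  Function.Injective A ∧ ∀ s : Finset V, K.IsFacet s ↔ ∃ a, A a = s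

/-- A simplicial complex is connected if it has a vertex and any two vertices
are joined by a path of edges. -/
def Conn [DecidableEq V] (K : SComplex V) : Prop :=
  (∃ v, {v} ∈ K.faces) ∧ ∀ v w : V, {v} ∈ K.faces → {w} ∈ K.faces →
    Relation.ReflTransGen (fun a b => ({a, b} : Finset V) ∈ K.faces) v w

/-- There is a simplicial isomorphism between `K₁` and `K₂`. -/
def SimplicialIso {V₁ V₂ : Type} [DecidableEq V₂]
    (K₁ : SComplex V₁) (K₂ : SComplex V₂) : Prop :=
  ∃ f : V₁ → V₂, Set.InjOn f {v | {v} ∈ K₁.faces} ∧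
    (∀ s ∈ K₁.faces, s.image f ∈ K₂.faces) ∧
    (∀ t ∈ K₂.faces, ∃ s ∈ K₁.faces, s.image f = t)

section Homology

variable (k : Type) [Field k]

/-- The space of simplicial `ℓ`-chains (on faces of cardinality `ℓ`), with
coefficients in `k`.  (Note the shift: level `ℓ` corresponds to homological
degree `ℓ - 1` in reduced homology; level `0` is spanned by the empty face.) -/
abbrev chainSpace (K : SComplex V) (ℓ : ℕ) : Type :=
  {s : Finset V // s ∈ K.faces ∧ s.card = ℓ} → k

open Classical in
/-- The simplicial boundary map (expressed on chains-as-functions via cofaces),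
using a classical well-ordering of the vertices for the orientation signs. -/
noncomputable def boundary [Fintype V] [DecidableEq V] (K : SComplex V) (ℓ : ℕ) :
    chainSpace k K (ℓ + 1) →ₗ[k] chainSpace k K ℓ where
  toFun g := fun t => ∑ v ∈ t.1ᶜ.attach,
    if h : insert v.1 t.1 ∈ K.faces then
      ((-1 : k) ^ (((↑t.1 : Set V) ∩ {w | WellOrderingRel w v.1}).ncard)) *
        g ⟨insert v.1 t.1, h, by
          rw [Finset.card_insert_of_notMem (Finset.mem_compl.mp v.2), t.2.2]⟩
    else 0
  map_add' := by
    intro g h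
    funext t
    rw [Pi.add_apply, ← Finset.sum_add_distrib]
    refine Finset.sum_congr rfl fun v _ => ?_
    split <;> simp [mul_add]
  map_smul' := by
    intro c g
    funext t
    rw [RingHom.id_apply, Pi.smul_apply, Finset.smul_sum]
    refine Finset.sum_congr rfl fun v _ => ?_
    split <;> simp [smul_eq_mul] <;> ring

/-- Cycles at level `ℓ`; at level `0` every chain is a cycle. -/
noncomputable def cycles [Fintype V] [DecidableEq V] (K : SComplex V) :
    (ℓ : ℕ) → Submodule k (chainSpace k K ℓ)
  | 0 => ⊤
  | (n + 1) => LinearMap.ker (boundary k K n)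

/-- The `i`-th reduced simplicial homology of `K` with coefficients in the
field `k` (here `i : ℤ`; it vanishes by definition for `i < -1`). -/
noncomputable def Hred [Fintype V] [DecidableEq V] (K : SComplex V) (i : ℤ) :
    ModuleCat k :=
  if i < -1 then ModuleCat.of k PUnit
  else ModuleCat.of k
    ((cycles k K (i + 1).toNat) ⧸
      (Submodule.comap (cycles k K (i + 1).toNat).subtype
        (LinearMap.range (boundary k K (i + 1).toNat))))

end Homology

section Enumerative

/-- `f_i(Δ)`: the number of faces of cardinality `i + 1`. -/
noncomputable def fvec (K : SComplex V) (i : ℕ) : ℕ :=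
  Set.ncard {s | s ∈ K.faces ∧ s.card = i + 1}

/-- The (non-reduced) Euler characteristic `χ(Δ) = Σ_h (-1)^h f_h(Δ)`. -/
noncomputable def euler [Fintype V] (K : SComplex V) : ℤ :=
  ∑ h ∈ Finset.range (Fintype.card V + 1), (-1) ^ h * (fvec K h : ℤ)

/-- The reduced Euler characteristic `χ̃(Δ) = -1 + Σ_h (-1)^h f_h(Δ)`. -/
noncomputable def reducedEuler [Fintype V] (K : SComplex V) : ℤ :=
  euler K - 1

/-- The `h`-vector: `h_k = Σ_{i=0}^k (-1)^{k-i} C(d-i, k-i) f_{i-1}`. -/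
noncomputable def hvec (K : SComplex V) (d : ℕ) (j : ℕ) : ℤ :=
  ∑ i ∈ Finset.range (j + 1),
    (-1) ^ (j - i) * ((d - i).choose (j - i) : ℤ) *
      (if i = 0 then 1 else (fvec K (i - 1) : ℤ))

end Enumerative

section StanleyReisner

variable (k : Type) [Field k]

/-- The Stanley–Reisner ideal of `K`: generated by the squarefree monomials
supported on non-faces. -/
noncomputable def srIdeal (K : SComplex V) : Ideal (MvPolynomial V k) :=
  Ideal.span {p | ∃ s : Finset V, s ∉ K.faces ∧ p = ∏ v ∈ s, MvPolynomial.X v}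

/-- The Stanley–Reisner ring `k[Δ]`. -/
abbrev srRing (K : SComplex V) : Type := MvPolynomial V k ⧸ srIdeal k K

/-- The depth of a module `M` with respect to an ideal `I`: the supremum of
the lengths of `M`-regular sequences consisting of elements of `I`. -/
noncomputable def idealDepth (R : Type) [CommRing R] (I : Ideal R)
    (M : Type) [AddCommGroup M] [Module R M] : ℕ :=
  sSup {n | ∃ rs : List R, rs.length = n ∧ (∀ r ∈ rs, r ∈ I) ∧
    RingTheory.Sequence.IsRegular M rs}

/-- `depth k[Δ]`: the depth of the Stanley–Reisner ring with respect to its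
graded maximal ideal (generated by all the variables). -/
noncomputable def srDepth (K : SComplex V) : ℕ :=
  idealDepth (srRing k K)
    (Ideal.span (Set.range fun v : V =>
      Ideal.Quotient.mk (srIdeal k K) (MvPolynomial.X v)))
    (srRing k K)

end StanleyReisner

end SComplex
namespace NerveVanish

open SComplex Finset

variable {V : Type} [Fintype V] [DecidableEq V] (k : Type) [Field k]

/-- The sign used in the boundary map. -/
noncomputable def sg (s : Finset V) (v : V) : k :=
  (-1 : k) ^ (((↑s : Set V) ∩ {w | WellOrderingRel w v}).ncard)

open Classical in
/-- Term function for the boundary map, summed over all of `V`. -/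
noncomputable def cf (K : SComplex V) (ℓ : ℕ) (g : chainSpace k K (ℓ + 1))
    (t : Finset V) (htc : t.card = ℓ) (v : V) : k :=
  if h : v ∉ t ∧ insert v t ∈ K.faces then
    sg k t v * g ⟨insert v t, h.2, by rw [Finset.card_insert_of_notMem h.1, htc]⟩
  else 0

lemma boundary_apply (K : SComplex V) (ℓ : ℕ) (g : chainSpace k K (ℓ + 1))
    (t : Finset V) (ht : t ∈ K.faces) (htc : t.card = ℓ) :
    boundary k K ℓ g ⟨t, ht, htc⟩ = ∑ v : V, cf k K ℓ g t htc v := by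
  have h1 : boundary k K ℓ g ⟨t, ht, htc⟩ = ∑ v ∈ tᶜ.attach, cf k K ℓ g t htc v.1 := by
    simp only [boundary, LinearMap.coe_mk, AddHom.coe_mk]
    refine Finset.sum_congr rfl fun v _ => ?_
    have hv : v.1 ∉ t := Finset.mem_compl.mp v.2
    by_cases h : insert v.1 t ∈ K.faces
    · rw [dif_pos h, cf, dif_pos ⟨hv, h⟩]
      rfl
    · rw [dif_neg h, cf, dif_neg (by tauto)]
  rw [h1, Finset.sum_attach tᶜ (cf k K ℓ g t htc)]
  refine Finset.sum_subset (Finset.subset_univ _) fun v _ hv => ?_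
  rw [cf, dif_neg]
  simp only [Finset.mem_compl] at hv
  tauto

end NerveVanish
namespace NerveVanish

open SComplex Finset

variable {V : Type} [Fintype V] [DecidableEq V] (k : Type) [Field k]

open Classical in
lemma sg_insert (s : Finset V) (v w : V) (hw : w ∉ s) :
    sg k (insert w s) v = (if WellOrderingRel w v then (-1 : k) else 1) * sg k s v := by
  rw [sg, sg]
  by_cases h : WellOrderingRel w v
  · have h2 : ((insert w s : Finset V) : Set V) ∩ {x | WellOrderingRel x v}
        = insert w ((s : Set V) ∩ {x | WellOrderingRel x v}) := by
      ext x
      simp only [Finset.coe_insert, Set.mem_inter_iff, Set.mem_insert_iff, Set.mem_setOf_eq,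
        Finset.mem_coe]
      constructor
      · rintro ⟨hx1 | hx1, hx2⟩
        · exact Or.inl hx1
        · exact Or.inr ⟨hx1, hx2⟩
      · rintro (rfl | ⟨hx1, hx2⟩)
        · exact ⟨Or.inl rfl, h⟩
        · exact ⟨Or.inr hx1, hx2⟩
    rw [h2, Set.ncard_insert_of_notMem (by simp [hw]) (Set.toFinite _), if_pos h, pow_succ]
    ring
  · have h2 : ((insert w s : Finset V) : Set V) ∩ {x | WellOrderingRel x v}
        = (s : Set V) ∩ {x | WellOrderingRel x v} := by
      ext x
      simp only [Finset.coe_insert, Set.mem_inter_iff, Set.mem_insert_iff, Set.mem_setOf_eq,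
        Finset.mem_coe]
      constructor
      · rintro ⟨hx1 | hx1, hx2⟩
        · exact absurd (hx1 ▸ hx2) h
        · exact ⟨hx1, hx2⟩
      · rintro ⟨hx1, hx2⟩
        exact ⟨Or.inr hx1, hx2⟩
    rw [h2, if_neg h, one_mul]

lemma sg_mul_self (s : Finset V) (v : V) : sg k s v * sg k s v = 1 := by
  rw [sg, ← pow_add]
  exact Even.neg_one_pow ⟨_, rfl⟩

lemma sg_ne_zero (s : Finset V) (v : V) : sg k s v ≠ 0 := by
  rw [sg]
  exact pow_ne_zero _ (neg_ne_zero.mpr one_ne_zero)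

open Classical in
lemma sg_anti (t : Finset V) (v w : V) (hv : v ∉ t) (hw : w ∉ t) (hvw : v ≠ w) :
    sg k t v * sg k (insert v t) w = -(sg k t w * sg k (insert w t) v) := by
  rw [sg_insert k t w v hv, sg_insert k t v w hw]
  rcases trichotomous_of WellOrderingRel v w with h | h | h
  · rw [if_pos h, if_neg (asymm h)]
    ring
  · exact absurd h hvw
  · rw [if_neg (asymm h), if_pos h]
    ring

open Classical in
/-- The two-step term in `∂∂`. -/
noncomputable def cf2 (K : SComplex V) (m : ℕ) (g : chainSpace k K (m + 2))
    (t : Finset V) (htc : t.card = m) (v w : V) : k :=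
  if h : v ∉ t ∧ w ∉ t ∧ v ≠ w ∧ insert w (insert v t) ∈ K.faces then
    sg k t v * sg k (insert v t) w * g ⟨insert w (insert v t), h.2.2.2, by
      rw [Finset.card_insert_of_notMem (by simp [h.2.1, Ne.symm h.2.2.1]),
        Finset.card_insert_of_notMem h.1, htc]⟩
  else 0

lemma cf2_swap (K : SComplex V) (m : ℕ) (g : chainSpace k K (m + 2))
    (t : Finset V) (htc : t.card = m) (v w : V) :
    cf2 k K m g t htc v w + cf2 k K m g t htc w v = 0 := by
  by_cases hvw : v = w
  · subst hvw
    rw [cf2, dif_neg (by tauto)]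
    simp
  · rw [cf2, cf2]
    by_cases h : v ∉ t ∧ w ∉ t ∧ v ≠ w ∧ insert w (insert v t) ∈ K.faces
    · rw [dif_pos h, dif_pos ⟨h.2.1, h.1, Ne.symm hvw, by rw [Finset.insert_comm]; exact h.2.2.2⟩]
      have harg : (⟨insert w (insert v t), h.2.2.2, by
            rw [Finset.card_insert_of_notMem (by simp [h.2.1, Ne.symm h.2.2.1]),
              Finset.card_insert_of_notMem h.1, htc]⟩ :
            {s : Finset V // s ∈ K.faces ∧ s.card = m + 2}) =
          ⟨insert v (insert w t), by rw [Finset.insert_comm]; exact h.2.2.2, by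
            rw [Finset.card_insert_of_notMem (by simp [h.1, hvw]),
              Finset.card_insert_of_notMem h.2.1, htc]⟩ := by
        apply Subtype.ext
        exact Finset.insert_comm w v t
      rw [← harg]
      rw [sg_anti k t v w h.1 h.2.1 hvw]
      ring
    · rw [dif_neg h, dif_neg (by
        rintro ⟨h1, h2, h3, h4⟩
        exact h ⟨h2, h1, Ne.symm h3, by rw [Finset.insert_comm]; exact h4⟩)]
      simp

lemma boundary_boundary (K : SComplex V) (m : ℕ) (g : chainSpace k K (m + 2)) :
    boundary k K m (boundary k K (m + 1) g) = 0 := by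
  funext t
  obtain ⟨t, ht, htc⟩ := t
  rw [boundary_apply k K m _ t ht htc]
  have hterm : ∀ v : V, cf k K m (boundary k K (m + 1) g) t htc v
      = ∑ w : V, cf2 k K m g t htc v w := by
    intro v
    by_cases h : v ∉ t ∧ insert v t ∈ K.faces
    · rw [cf, dif_pos h, boundary_apply k K (m + 1) g (insert v t) h.2
        (by rw [Finset.card_insert_of_notMem h.1, htc]), Finset.mul_sum]
      refine Finset.sum_congr rfl fun w _ => ?_
      by_cases h' : w ∉ insert v t ∧ insert w (insert v t) ∈ K.faces
      · rw [cf, dif_pos h', cf2, dif_pos ⟨h.1, fun hwt => h'.1 (Finset.mem_insert_of_mem hwt),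
          fun hvw => h'.1 (hvw ▸ Finset.mem_insert_self v t), h'.2⟩]
        rw [mul_assoc]
      · rw [cf, dif_neg h', cf2, dif_neg (by
          rintro ⟨h1, h2, h3, h4⟩
          exact h' ⟨by simp [h2, Ne.symm h3], h4⟩), mul_zero]
    · rw [cf, dif_neg h]
      refine (Finset.sum_eq_zero fun w _ => ?_).symm
      rw [cf2, dif_neg]
      rintro ⟨h1, h2, h3, h4⟩
      exact h ⟨h1, K.down_closed h4 (Finset.subset_insert _ _)⟩
  rw [Finset.sum_congr rfl fun v _ => hterm v, ← Finset.sum_product']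
  show ∑ p ∈ Finset.univ ×ˢ Finset.univ, cf2 k K m g t htc p.1 p.2 = _
  rw [Finset.sum_involution (fun p _ => p.swap)
    (fun p _ => cf2_swap k K m g t htc p.1 p.2)
    (fun p _ hp => ?_) (fun p hp => Finset.mem_product.mpr ⟨Finset.mem_univ _, Finset.mem_univ _⟩)
    (fun p _ => Prod.swap_swap p)]
  · rfl
  · intro hsw
    apply hp
    have hvw : p.1 = p.2 := by
      have := congrArg Prod.fst hsw
      simp [Prod.swap] at this
      exact this.symm
    rw [cf2, dif_neg (by tauto)]

end NerveVanish
namespace NerveVanish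

open SComplex Finset

variable {V : Type} [Fintype V] [DecidableEq V] {r : ℕ} (A : Fin r → Finset V)

/-- Intersection of the sets indexed by `F` (the whole space for `F = ∅`). -/
def II (F : Finset (Fin r)) : Finset V := F.inf A

/-- The set of "redundant positions": `b` such that `A b` contains the
intersection of the `A a`, `a ∈ F`, `a < b`. -/
def SS (F : Finset (Fin r)) : Finset (Fin r) :=
  Finset.univ.filter (fun b => II A (F.filter (· < b)) ⊆ A b)

lemma mem_SS {F : Finset (Fin r)} {b : Fin r} :
    b ∈ SS A F ↔ II A (F.filter (· < b)) ⊆ A b := by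
  simp [SS]

lemma II_mono {F G : Finset (Fin r)} (h : F ⊆ G) : II A G ⊆ II A F :=
  Finset.le_iff_subset.mp (Finset.inf_mono h)

lemma II_le {F : Finset (Fin r)} {a : Fin r} (h : a ∈ F) : II A F ⊆ A a :=
  Finset.le_iff_subset.mp (Finset.inf_le h)

lemma II_insert_of_mem_SS {F : Finset (Fin r)} {b₀ : Fin r} (hb : b₀ ∈ SS A F) :
    II A (insert b₀ F) = II A F := by
  rw [II, Finset.inf_insert]
  apply le_antisymm inf_le_right (le_inf ?_ le_rfl)
  exact le_trans (II_mono A (Finset.filter_subset _ _)) (mem_SS A |>.mp hb)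

lemma SS_insert {F : Finset (Fin r)} {b₀ : Fin r} (hb : b₀ ∈ SS A F) :
    SS A (insert b₀ F) = SS A F := by
  ext e
  rw [mem_SS, mem_SS]
  have key : II A ((insert b₀ F).filter (· < e)) = II A (F.filter (· < e)) := by
    rw [Finset.filter_insert]
    split_ifs with h
    · rw [II, Finset.inf_insert]
      apply le_antisymm inf_le_right (le_inf ?_ le_rfl)
      refine le_trans (II_mono A (fun a ha => ?_)) (mem_SS A |>.mp hb)
      rw [Finset.mem_filter] at ha ⊢
      exact ⟨ha.1, lt_trans ha.2 h⟩
    · rfl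
  rw [key]

lemma mem_SS_erase_self {F : Finset (Fin r)} {b₀ : Fin r} :
    b₀ ∈ SS A (F.erase b₀) ↔ b₀ ∈ SS A F := by
  rw [mem_SS, mem_SS]
  have : (F.erase b₀).filter (· < b₀) = F.filter (· < b₀) := by
    ext a
    simp only [Finset.mem_filter, Finset.mem_erase]
    constructor
    · rintro ⟨⟨_, ha⟩, hlt⟩; exact ⟨ha, hlt⟩
    · rintro ⟨ha, hlt⟩; exact ⟨⟨ne_of_lt hlt, ha⟩, hlt⟩
  rw [this]

lemma SS_erase {F : Finset (Fin r)} {b₀ : Fin r} (hb : b₀ ∈ SS A F) (hbF : b₀ ∈ F) :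
    SS A (F.erase b₀) = SS A F := by
  have h1 : b₀ ∈ SS A (F.erase b₀) := (mem_SS_erase_self A).mpr hb
  have h2 := SS_insert A h1
  rw [Finset.insert_erase hbF] at h2
  exact h2.symm

lemma II_erase {F : Finset (Fin r)} {b₀ : Fin r} (hb : b₀ ∈ SS A F) (hbF : b₀ ∈ F) :
    II A (F.erase b₀) = II A F := by
  have h1 : b₀ ∈ SS A (F.erase b₀) := (mem_SS_erase_self A).mpr hb
  have h2 := II_insert_of_mem_SS A h1
  rw [Finset.insert_erase hbF] at h2
  exact h2.symm

/-- If no element of `F` is redundant, then `F` is small. -/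
lemma card_of_no_redundant : ∀ n : ℕ, ∀ F : Finset (Fin r), F.card = n →
    ∀ hne : F.Nonempty, (∀ b ∈ F, ¬ II A (F.filter (· < b)) ⊆ A b) →
    (II A F).card + F.card ≤ (A (F.min' hne)).card + 1 := by
  intro n
  induction n with
  | zero =>
    intro F hcard hne _
    obtain ⟨x, hx⟩ := hne
    rw [Finset.card_eq_zero] at hcard
    subst hcard
    simp at hx
  | succ n ih =>
    intro F hcard hne hred
    rcases Nat.eq_zero_or_pos n with hn | hn
    · subst hn
      obtain ⟨b, rfl⟩ := Finset.card_eq_one.mp hcard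
      simp [II]
    · -- |F| ≥ 2
      have hcard2 : 1 < F.card := by omega
      set b := F.max' hne with hbdef
      have hbF : b ∈ F := F.max'_mem hne
      set F' := F.erase b with hF'def
      have hcF' : F'.card = n := by
        rw [hF'def, Finset.card_erase_of_mem hbF, hcard]
        omega
      have hneF' : F'.Nonempty := Finset.card_pos.mp (by omega)
      have hminmax : F.min' hne < F.max' hne := Finset.min'_lt_max'_of_card F hcard2
      have hminF' : F.min' hne ∈ F' := by
        rw [hF'def, Finset.mem_erase]
        exact ⟨ne_of_lt hminmax, F.min'_mem hne⟩
      have hminEq : F'.min' hneF' = F.min' hne := by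
        apply le_antisymm
        · exact Finset.min'_le _ _ hminF'
        · exact Finset.min'_le _ _ (Finset.mem_of_mem_erase (F'.min'_mem hneF'))
      have hfilter : F.filter (· < b) = F' := by
        ext a
        simp only [Finset.mem_filter, hF'def, Finset.mem_erase]
        constructor
        · rintro ⟨ha, hlt⟩; exact ⟨ne_of_lt hlt, ha⟩
        · rintro ⟨hne', ha⟩
          exact ⟨ha, lt_of_le_of_ne (F.le_max' a ha) hne'⟩
      have hbred : ¬ II A F' ⊆ A b := by
        have := hred b hbF
        rwa [hfilter] at this
      have hIF : II A F = A b ⊓ II A F' := by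
        conv_lhs => rw [← Finset.insert_erase hbF]
        rw [II, Finset.inf_insert]
        rfl
      have hssub : II A F ⊂ II A F' := by
        rw [Finset.ssubset_iff_subset_ne]
        constructor
        · rw [hIF]; exact Finset.le_iff_subset.mp inf_le_right
        · intro heq
          apply hbred
          rw [← heq, hIF]
          exact Finset.le_iff_subset.mp inf_le_left
      have hcardlt : (II A F).card < (II A F').card := Finset.card_lt_card hssub
      have hredF' : ∀ b' ∈ F', ¬ II A (F'.filter (· < b')) ⊆ A b' := by
        intro b' hb'
        have hb'F : b' ∈ F := Finset.mem_of_mem_erase hb'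
        have : F'.filter (· < b') = F.filter (· < b') := by
          ext a
          simp only [Finset.mem_filter, hF'def, Finset.mem_erase]
          constructor
          · rintro ⟨⟨_, ha⟩, hlt⟩; exact ⟨ha, hlt⟩
          · rintro ⟨ha, hlt⟩
            refine ⟨⟨?_, ha⟩, hlt⟩
            intro heq
            subst heq
            exact absurd hlt (not_lt.mpr (F.le_max' b' hb'F))
        rw [this]
        exact hred b' hb'F
      have := ih F' hcF' hneF' hredF'
      rw [hminEq] at this
      omega

end NerveVanish
namespace NerveVanish

open SComplex Finset

variable {V : Type} [Fintype V] [DecidableEq V] (k : Type) [Field k]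

/-- The chain supported on a single face. -/
noncomputable def sing (K : SComplex V) (ℓ : ℕ)
    (d : {s : Finset V // s ∈ K.faces ∧ s.card = ℓ}) (c : k) : chainSpace k K ℓ :=
  fun x => if x.1 = d.1 then c else 0

lemma bnd_sing_eq_zero (K : SComplex V) (ℓ : ℕ)
    (d : {s : Finset V // s ∈ K.faces ∧ s.card = ℓ + 1}) (c : k)
    (t : {s : Finset V // s ∈ K.faces ∧ s.card = ℓ}) (h : ¬ t.1 ⊆ d.1) :
    boundary k K ℓ (sing k K (ℓ + 1) d c) t = 0 := by
  obtain ⟨t, ht, htc⟩ := t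
  rw [boundary_apply k K ℓ _ t ht htc]
  refine Finset.sum_eq_zero fun v _ => ?_
  rw [cf]
  split_ifs with h'
  · rw [sing]
    simp only
    rw [if_neg, mul_zero]
    intro heq
    exact h (fun x hx => heq ▸ Finset.mem_insert_of_mem hx)
  · rfl

lemma bnd_sing_eq (K : SComplex V) (ℓ : ℕ)
    (d : {s : Finset V // s ∈ K.faces ∧ s.card = ℓ + 1}) (c : k)
    (t : {s : Finset V // s ∈ K.faces ∧ s.card = ℓ}) (v : V) (hv : v ∉ t.1)
    (hins : insert v t.1 = d.1) :
    boundary k K ℓ (sing k K (ℓ + 1) d c) t = sg k t.1 v * c := by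
  obtain ⟨t, ht, htc⟩ := t
  simp only at hv hins ⊢
  rw [boundary_apply k K ℓ _ t ht htc]
  rw [Finset.sum_eq_single_of_mem v (Finset.mem_univ v)]
  · rw [cf, dif_pos ⟨hv, hins ▸ d.2.1⟩, sing]
    simp only
    rw [if_pos hins]
  · intro w _ hwv
    rw [cf]
    split_ifs with h'
    · rw [sing]
      simp only
      rw [if_neg, mul_zero]
      intro heq
      apply hwv
      have : w ∈ insert v t := by
        rw [hins, ← heq]
        exact Finset.mem_insert_self w t
      rcases Finset.mem_insert.mp this with h1 | h1
      · exact h1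
      · exact absurd h1 h'.1
    · rfl

variable {r : ℕ} (A : Fin r → Finset V)

/-- Binary weight of a finite set of indices. -/
def ww (F : Finset (Fin r)) : ℕ := ∑ a ∈ F, 2 ^ (a : ℕ)

lemma sum_two_pow_lt {a : Fin r} {s : Finset (Fin r)} (h : ∀ b ∈ s, b < a) :
    ww s < 2 ^ (a : ℕ) := by
  have h1 : ww s = ∑ i ∈ s.image (fun b : Fin r => (b : ℕ)), 2 ^ i := by
    rw [Finset.sum_image (fun x _ y _ h => Fin.val_injective h)]
    rfl
  have h2 : s.image (fun b : Fin r => (b : ℕ)) ⊆ Finset.range (a : ℕ) := by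
    intro i hi
    obtain ⟨b, hb, rfl⟩ := Finset.mem_image.mp hi
    exact Finset.mem_range.mpr (h b hb)
  have h3 : ∑ i ∈ Finset.range (a : ℕ), 2 ^ i = 2 ^ (a : ℕ) - 1 := by
    induction (a : ℕ) with
    | zero => simp
    | succ n ihn =>
      rw [Finset.sum_range_succ, ihn]
      have := Nat.one_le_two_pow (n := n)
      omega
  have h4 : ww s ≤ ∑ i ∈ Finset.range (a : ℕ), 2 ^ i := by
    rw [h1]
    exact Finset.sum_le_sum_of_subset h2
  have := Nat.one_le_two_pow (n := (a : ℕ))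
  omega

lemma ww_inj {F G : Finset (Fin r)} (h : ww F = ww G) : F = G := by
  by_contra hne
  have key : ∀ F G : Finset (Fin r), ww F = ww G →
      ∀ a ∈ F, a ∉ G → (∀ b ∈ G, b ∉ F → b < a) → False := by
    intro F G hww a haF haG hmax
    have h1 : ww F = ww (F ∩ G) + ww (F \ G) := (Finset.sum_inter_add_sum_sdiff F G _).symm
    have h2 : ww G = ww (G ∩ F) + ww (G \ F) := (Finset.sum_inter_add_sum_sdiff G F _).symm
    have h3 : ww (F ∩ G) = ww (G ∩ F) := by rw [Finset.inter_comm]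
    have h4 : 2 ^ (a : ℕ) ≤ ww (F \ G) := by
      rw [ww]
      exact Finset.single_le_sum (f := fun b : Fin r => 2 ^ (b : ℕ))
        (fun b _ => Nat.zero_le _) (Finset.mem_sdiff.mpr ⟨haF, haG⟩)
    have h5 : ww (G \ F) < 2 ^ (a : ℕ) := by
      apply sum_two_pow_lt
      intro b hb
      rw [Finset.mem_sdiff] at hb
      exact hmax b hb.1 hb.2
    omega
  -- find the max of the symmetric difference
  have hsd : ((F \ G) ∪ (G \ F)).Nonempty := by
    rw [Finset.nonempty_iff_ne_empty]
    intro hemp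
    apply hne
    have h1 : F \ G = ∅ := Finset.union_eq_empty.mp hemp |>.1
    have h2 : G \ F = ∅ := Finset.union_eq_empty.mp hemp |>.2
    exact Finset.Subset.antisymm (Finset.sdiff_eq_empty_iff_subset.mp h1)
      (Finset.sdiff_eq_empty_iff_subset.mp h2)
  set a := ((F \ G) ∪ (G \ F)).max' hsd with hadef
  have haM := ((F \ G) ∪ (G \ F)).max'_mem hsd
  rw [← hadef] at haM
  rcases Finset.mem_union.mp haM with ha | ha
  · rw [Finset.mem_sdiff] at ha
    refine key F G h a ha.1 ha.2 fun b hb hbF => ?_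
    have hble : b ≤ a := Finset.le_max' _ b (Finset.mem_union_right _ (Finset.mem_sdiff.mpr ⟨hb, hbF⟩))
    have : b ≠ a := fun heq => ha.2 (heq ▸ hb)
    exact lt_of_le_of_ne hble this
  · rw [Finset.mem_sdiff] at ha
    refine key G F h.symm a ha.1 ha.2 fun b hb hbF => ?_
    have hble : b ≤ a := Finset.le_max' _ b (Finset.mem_union_left _ (Finset.mem_sdiff.mpr ⟨hb, hbF⟩))
    have : b ≠ a := fun heq => ha.2 (heq ▸ hb)
    exact lt_of_le_of_ne hble this

lemma ww_le (F : Finset (Fin r)) : ww F ≤ ww (Finset.univ : Finset (Fin r)) :=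
  Finset.sum_le_sum_of_subset (Finset.subset_univ F)

lemma ww_erase_add {F : Finset (Fin r)} {a : Fin r} (h : a ∈ F) :
    ww (F.erase a) + 2 ^ (a : ℕ) = ww F :=
  Finset.sum_erase_add F _ h

/-- Triangularity: erasing a non-toggle element above the toggle keeps the set
"down-matched" with the same toggle. -/
lemma tri {dF : Finset (Fin r)} (h : (SS A dF).Nonempty)
    (hb : (SS A dF).min' h ∈ dF) {c : Fin r} (hc : c ∈ dF)
    (hbc : (SS A dF).min' h < c) :
    ∃ h' : (SS A (dF.erase c)).Nonempty,
      (SS A (dF.erase c)).min' h' = (SS A dF).min' h := by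
  set b := (SS A dF).min' h with hbdef
  have hfilter : ∀ e : Fin r, e ≤ b → (dF.erase c).filter (· < e) = dF.filter (· < e) := by
    intro e he
    ext x
    simp only [Finset.mem_filter, Finset.mem_erase]
    constructor
    · rintro ⟨⟨_, hx⟩, hlt⟩; exact ⟨hx, hlt⟩
    · rintro ⟨hx, hlt⟩
      refine ⟨⟨fun heq => ?_, hx⟩, hlt⟩
      subst heq
      exact absurd (lt_of_lt_of_le hlt he) (not_lt.mpr (le_of_lt hbc))
  have hbSS : b ∈ SS A (dF.erase c) := by
    rw [mem_SS, hfilter b le_rfl]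
    exact (mem_SS A).mp ((SS A dF).min'_mem h)
  refine ⟨⟨b, hbSS⟩, ?_⟩
  apply le_antisymm
  · exact Finset.min'_le _ _ hbSS
  · set e := (SS A (dF.erase c)).min' ⟨b, hbSS⟩ with hedef
    by_contra hlt
    push_neg at hlt
    have heSS : e ∈ SS A (dF.erase c) := Finset.min'_mem _ _
    have : e ∈ SS A dF := by
      rw [mem_SS] at heSS ⊢
      rwa [hfilter e (le_of_lt hlt)] at heSS
    exact absurd (Finset.min'_le _ _ this) (not_le.mpr hlt)

end NerveVanish
namespace NerveVanish

open SComplex Finset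

variable {V : Type} [Fintype V] [DecidableEq V] (k : Type) [Field k]
variable {r : ℕ} (A : Fin r → Finset V) (j d : ℕ)

lemma min'_congr {α : Type*} [LinearOrder α] {s t : Finset α} (hs : s.Nonempty)
    (ht : t.Nonempty) (h : s = t) : s.min' hs = t.min' ht := by
  subst h
  rfl

lemma face_II {F : Finset (Fin r)} (hF : F ∈ (nerve A j).faces) (hne : F.Nonempty) :
    j ≤ (II A F).card := by
  have h1 : j ≤ (F.inf' hne A).card := hF hne
  rwa [Finset.inf'_eq_inf] at h1

lemma face_insert_SS {F : Finset (Fin r)} (hF : F ∈ (nerve A j).faces) (hne : F.Nonempty)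
    {b : Fin r} (hb : b ∈ SS A F) : insert b F ∈ (nerve A j).faces := by
  intro hne'
  rw [Finset.inf'_eq_inf]
  show j ≤ (II A (insert b F)).card
  rw [II_insert_of_mem_SS A hb]
  exact face_II A j hF hne

lemma SS_nonempty_of_big {F : Finset (Fin r)} (hd2 : ∀ a : Fin r, (A a).card ≤ d)
    (hF : F ∈ (nerve A j).faces) (hne : F.Nonempty) (hbig : d + 2 ≤ j + F.card) :
    (SS A F).Nonempty := by
  by_contra h
  rw [Finset.not_nonempty_iff_eq_empty] at h
  have hred : ∀ b ∈ F, ¬ II A (F.filter (· < b)) ⊆ A b := by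
    intro b _ hsub
    have hb : b ∈ SS A F := (mem_SS A).mpr hsub
    rw [h] at hb
    exact absurd hb (Finset.notMem_empty b)
  have h1 := card_of_no_redundant A F.card F rfl hne hred
  have h2 := face_II A j hF hne
  have h3 := hd2 (F.min' hne)
  omega

/-- Step 2: a cycle all of whose support is "down-matched" is zero. -/
theorem step2 (hd2 : ∀ a : Fin r, (A a).card ≤ d) (m : ℕ) (hm : d + 1 ≤ j + m)
    (z : chainSpace k (nerve A j) (m + 1))
    (hz : boundary k (nerve A j) m z = 0)
    (hdn : ∀ x : {s : Finset (Fin r) // s ∈ (nerve A j).faces ∧ s.card = m + 1},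
      z x ≠ 0 → ∃ h : (SS A x.1).Nonempty, (SS A x.1).min' h ∈ x.1) :
    z = 0 := by
  classical
  by_contra hzne
  have hex : ∃ x, z x ≠ 0 := by
    by_contra hall
    push_neg at hall
    exact hzne (funext fun x => hall x)
  obtain ⟨x₀, hx₀⟩ := hex
  have hne0 : x₀.1.Nonempty := Finset.card_pos.mp (by rw [x₀.2.2]; omega)
  have hner : Nonempty (Fin r) := ⟨hne0.choose⟩
  set mS : Finset (Fin r) → Fin r :=
    fun F => if h : (SS A F).Nonempty then (SS A F).min' h else Classical.arbitrary _ with hmSdef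
  set meas : {s : Finset (Fin r) // s ∈ (nerve A j).faces ∧ s.card = m + 1} → ℕ :=
    fun x => ww (x.1.erase (mS x.1)) with hmeasdef
  have hPex : ∃ n, ∃ x, z x ≠ 0 ∧ meas x = n := ⟨meas x₀, x₀, hx₀, rfl⟩
  obtain ⟨xs, hxs, hxsm⟩ := Nat.find_spec hPex
  have hmin : ∀ x, z x ≠ 0 → Nat.find hPex ≤ meas x := by
    intro x hx
    by_contra hlt
    push_neg at hlt
    exact Nat.find_min hPex hlt ⟨x, hx, rfl⟩
  obtain ⟨hSne, hbin⟩ := hdn xs hxs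
  set b := (SS A xs.1).min' hSne with hbdef
  have hmSxs : mS xs.1 = b := by rw [hmSdef]; simp only [dif_pos hSne]; rfl
  set us := xs.1.erase b with husdef
  have husface : us ∈ (nerve A j).faces := (nerve A j).down_closed xs.2.1 (Finset.erase_subset _ _)
  have huscard : us.card = m := by
    rw [husdef, Finset.card_erase_of_mem hbin, xs.2.2]
    omega
  have hbus : b ∉ us := Finset.notMem_erase _ _
  have hins : insert b us = xs.1 := Finset.insert_erase hbin
  have hSu : SS A us = SS A xs.1 := SS_erase A ((SS A xs.1).min'_mem hSne) hbin
  have hSune : (SS A us).Nonempty := by rw [hSu]; exact hSne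
  have hminus : (SS A us).min' hSune = b := by
    rw [hbdef]
    exact min'_congr hSune hSne hSu
  -- the key evaluation
  have h0 : boundary k (nerve A j) m z ⟨us, husface, huscard⟩ = 0 := by rw [hz]; rfl
  rw [boundary_apply k _ m z us husface huscard] at h0
  have hother : ∀ v ∈ (Finset.univ : Finset (Fin r)), v ≠ b →
      cf k (nerve A j) m z us huscard v = 0 := by
    intro v _ hvb
    rw [cf]
    split_ifs with h'
    · set xv : {s : Finset (Fin r) // s ∈ (nerve A j).faces ∧ s.card = m + 1} :=
        ⟨insert v us, h'.2, by rw [Finset.card_insert_of_notMem h'.1, huscard]⟩ with hxvdef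
      have hzxv : z xv = 0 := by
        by_contra hzv
        obtain ⟨hSv, hbv⟩ := hdn xv hzv
        set bx := (SS A xv.1).min' hSv with hbxdef
        have hxv_erase : xv.1.erase v = us := by
          rw [hxvdef]
          exact Finset.erase_insert h'.1
        rcases eq_or_ne v bx with heq | hne2
        · -- v is the toggle of xv : then xv's partner is us, so xv = xs and v = b
          have h1 : SS A us = SS A xv.1 := by
            rw [← hxv_erase]
            exact SS_erase A (by rw [heq]; exact (SS A xv.1).min'_mem hSv) (by rw [heq]; exact hbv)
          have h2 : (SS A us).min' hSune = bx := by
            rw [hbxdef]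
            exact min'_congr hSune hSv h1
          exact hvb (heq.trans (h2.symm.trans hminus))
        · have hbxin : bx ∈ us := by
            have h1 : bx ∈ insert v us := hbv
            rcases Finset.mem_insert.mp h1 with h2 | h2
            · exact absurd h2.symm hne2
            · exact h2
          rcases lt_or_gt_of_ne hne2 with hlt | hgt
          · -- v < bx : the measure of xv is smaller than that of xs, contradiction
            have e1 : ww (xv.1.erase bx) + 2 ^ (bx : ℕ) = ww xv.1 := ww_erase_add hbv
            have e2 : ww us + 2 ^ (v : ℕ) = ww xv.1 := by
              rw [← hxv_erase]
              exact ww_erase_add (by rw [hxvdef]; exact Finset.mem_insert_self v us)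
            have p2 : 2 ^ (v : ℕ) < 2 ^ (bx : ℕ) := Nat.pow_lt_pow_right (by norm_num) hlt
            have hm1 : meas xv = ww (xv.1.erase bx) := by
              rw [hmeasdef]
              simp only
              rw [hmSdef]
              simp only [dif_pos hSv]
              rfl
            have hm2 : Nat.find hPex = ww us := by
              rw [← hxsm, hmeasdef]
              simp only
              rw [hmSxs, ← husdef]
            have h3 := hmin xv hzv
            omega
          · -- bx < v : triangularity contradiction
            obtain ⟨h'', heq2⟩ := tri A hSv hbv (by rw [hxvdef]; exact Finset.mem_insert_self v us) hgt
            have h3 : (SS A us).min' hSune = bx := by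
              rw [hbxdef, ← heq2]
              exact min'_congr hSune h'' (by rw [hxv_erase])
            rw [hminus] at h3
            rw [← h3] at hbxin
            exact hbus hbxin
      show sg k us v * z xv = 0
      rw [hzxv, mul_zero]
    · rfl
  rw [Finset.sum_eq_single_of_mem b (Finset.mem_univ b) hother] at h0
  have hbface : insert b us ∈ (nerve A j).faces := by rw [hins]; exact xs.2.1
  rw [cf, dif_pos ⟨hbus, hbface⟩] at h0
  have hxseq : (⟨insert b us, hbface, by rw [Finset.card_insert_of_notMem hbus, huscard]⟩ :
      {s : Finset (Fin r) // s ∈ (nerve A j).faces ∧ s.card = m + 1}) = xs := Subtype.ext hins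
  rw [hxseq] at h0
  rcases mul_eq_zero.mp h0 with h | h
  · exact sg_ne_zero k us b h
  · exact hxs h

end NerveVanish
namespace NerveVanish

open SComplex Finset

variable {V : Type} [Fintype V] [DecidableEq V] (k : Type) [Field k]
variable {r : ℕ} (A : Fin r → Finset V) (j d : ℕ)

/-- Main induction: any cycle whose "up-matched" support has large weight is a boundary. -/
theorem ind (hd2 : ∀ a : Fin r, (A a).card ≤ d) (m : ℕ) (hm : d + 1 ≤ j + m) :
    ∀ kk : ℕ, ∀ z : chainSpace k (nerve A j) (m + 1),
      boundary k (nerve A j) m z = 0 →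
      (∀ x : {s : Finset (Fin r) // s ∈ (nerve A j).faces ∧ s.card = m + 1},
        z x ≠ 0 → (∃ h : (SS A x.1).Nonempty, (SS A x.1).min' h ∉ x.1) →
        ww (Finset.univ : Finset (Fin r)) + 1 - kk ≤ ww x.1) →
      ∃ w, boundary k (nerve A j) (m + 1) w = z := by
  classical
  intro kk
  induction kk with
  | zero =>
    intro z hz hbound
    have hdn : ∀ x : {s : Finset (Fin r) // s ∈ (nerve A j).faces ∧ s.card = m + 1},
        z x ≠ 0 → ∃ h : (SS A x.1).Nonempty, (SS A x.1).min' h ∈ x.1 := by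
      intro x hx
      have hxne : x.1.Nonempty := Finset.card_pos.mp (by rw [x.2.2]; omega)
      have hS : (SS A x.1).Nonempty :=
        SS_nonempty_of_big A j d hd2 x.2.1 hxne (by rw [x.2.2]; omega)
      refine ⟨hS, ?_⟩
      by_contra hnin
      have := hbound x hx ⟨hS, hnin⟩
      have := ww_le x.1
      omega
    have hz0 : z = 0 := step2 k A j d hd2 m hm z hz hdn
    exact ⟨0, by rw [map_zero, hz0]⟩
  | succ kk ih =>
    intro z hz hbound
    by_cases hup : ∃ x : {s : Finset (Fin r) // s ∈ (nerve A j).faces ∧ s.card = m + 1},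
        z x ≠ 0 ∧ ∃ h : (SS A x.1).Nonempty, (SS A x.1).min' h ∉ x.1
    · -- pick a minimal-weight up-matched support element
      have hPex : ∃ n, ∃ x : {s : Finset (Fin r) // s ∈ (nerve A j).faces ∧ s.card = m + 1},
          (z x ≠ 0 ∧ ∃ h : (SS A x.1).Nonempty, (SS A x.1).min' h ∉ x.1) ∧ ww x.1 = n := by
        obtain ⟨x, hx⟩ := hup
        exact ⟨ww x.1, x, hx, rfl⟩
      obtain ⟨u₀, ⟨hu₀ne, hSu₀, hbu₀⟩, hu₀w⟩ := Nat.find_spec hPex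
      have hminw : ∀ x, z x ≠ 0 → (∃ h : (SS A x.1).Nonempty, (SS A x.1).min' h ∉ x.1) →
          Nat.find hPex ≤ ww x.1 := by
        intro x hx hupx
        by_contra hlt
        push_neg at hlt
        exact Nat.find_min hPex hlt ⟨x, ⟨hx, hupx⟩, rfl⟩
      set b := (SS A u₀.1).min' hSu₀ with hbdef
      have hbS : b ∈ SS A u₀.1 := (SS A u₀.1).min'_mem hSu₀
      have hu₀nonempty : u₀.1.Nonempty := Finset.card_pos.mp (by rw [u₀.2.2]; omega)
      set d₀set := insert b u₀.1 with hd₀def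
      have hd₀face : d₀set ∈ (nerve A j).faces :=
        face_insert_SS A j u₀.2.1 hu₀nonempty hbS
      have hd₀card : d₀set.card = m + 2 := by
        rw [hd₀def, Finset.card_insert_of_notMem hbu₀, u₀.2.2]
      set d₀ : {s : Finset (Fin r) // s ∈ (nerve A j).faces ∧ s.card = m + 2} :=
        ⟨d₀set, hd₀face, hd₀card⟩ with hd₀ptdef
      set c₀ := z u₀ * sg k u₀.1 b with hc₀def
      set w₀ := sing k (nerve A j) (m + 2) d₀ c₀ with hw₀def
      set z' := z - boundary k (nerve A j) (m + 1) w₀ with hz'def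
      have hz'cycle : boundary k (nerve A j) m z' = 0 := by
        rw [hz'def, map_sub, hz, boundary_boundary k (nerve A j) m w₀, sub_zero]
      have hbval : boundary k (nerve A j) (m + 1) w₀ u₀ = sg k u₀.1 b * c₀ :=
        bnd_sing_eq k (nerve A j) (m + 1) d₀ c₀ u₀ b hbu₀ rfl
      have hz'u₀ : z' u₀ = 0 := by
        rw [hz'def, Pi.sub_apply, hbval, hc₀def]
        have h2 : sg k u₀.1 b * (z u₀ * sg k u₀.1 b)
            = (sg k u₀.1 b * sg k u₀.1 b) * z u₀ := by ring
        rw [h2, sg_mul_self, one_mul, sub_self]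
      -- facts about d₀
      have hSd₀ : SS A d₀set = SS A u₀.1 := SS_insert A hbS
      have hSd₀ne : (SS A d₀set).Nonempty := by rw [hSd₀]; exact hSu₀
      have hmind₀ : (SS A d₀set).min' hSd₀ne = b := by
        rw [hbdef]
        exact min'_congr hSd₀ne hSu₀ hSd₀
      have hbind₀ : b ∈ d₀set := by rw [hd₀def]; exact Finset.mem_insert_self b u₀.1
      -- the new cycle has strictly larger up-matched support weight
      have hbound' : ∀ x : {s : Finset (Fin r) // s ∈ (nerve A j).faces ∧ s.card = m + 1},
          z' x ≠ 0 → (∃ h : (SS A x.1).Nonempty, (SS A x.1).min' h ∉ x.1) →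
          ww (Finset.univ : Finset (Fin r)) + 1 - kk ≤ ww x.1 := by
        intro x hx hupx
        have hboundOld : ww (Finset.univ : Finset (Fin r)) + 1 - (kk + 1) ≤ ww u₀.1 :=
          hbound u₀ hu₀ne ⟨hSu₀, hbu₀⟩
        by_cases hzx : z x = 0
        · -- x comes from the boundary of the single chain
          have hbx : boundary k (nerve A j) (m + 1) w₀ x ≠ 0 := by
            intro h0
            apply hx
            rw [hz'def, Pi.sub_apply, hzx, h0, sub_zero]
          have hsub : x.1 ⊆ d₀set := by
            by_contra hnsub
            exact hbx (bnd_sing_eq_zero k (nerve A j) (m + 1) d₀ c₀ x hnsub)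
          have hcards : (d₀set \ x.1).card = 1 := by
            rw [Finset.card_sdiff_of_subset hsub, hd₀card, x.2.2]
            omega
          obtain ⟨c, hc⟩ := Finset.card_eq_one.mp hcards
          have hcmem : c ∈ d₀set ∧ c ∉ x.1 := by
            have : c ∈ d₀set \ x.1 := by rw [hc]; exact Finset.mem_singleton_self c
            exact Finset.mem_sdiff.mp this
          have hxd : x.1 = d₀set.erase c := by
            apply Finset.eq_of_subset_of_card_le
            · intro a ha
              exact Finset.mem_erase.mpr ⟨fun heq => hcmem.2 (heq ▸ ha), hsub ha⟩
            · rw [Finset.card_erase_of_mem hcmem.1, hd₀card, x.2.2]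
              omega
          rcases eq_or_ne c b with hcb | hcb
          · -- then x = u₀, contradiction with z' u₀ = 0
            exfalso
            apply hx
            have : x = u₀ := by
              apply Subtype.ext
              rw [hxd, hcb, hd₀def, Finset.erase_insert hbu₀]
            rw [this]
            exact hz'u₀
          · rcases lt_or_gt_of_ne hcb with hlt | hgt
            · -- c < b : weight increases
              have e1 : ww (d₀set.erase c) + 2 ^ (c : ℕ) = ww d₀set := ww_erase_add hcmem.1
              have e2 : ww u₀.1 + 2 ^ (b : ℕ) = ww d₀set := by
                have : d₀set.erase b = u₀.1 := by rw [hd₀def]; exact Finset.erase_insert hbu₀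
                rw [← this]
                exact ww_erase_add hbind₀
              have p2 : 2 ^ (c : ℕ) < 2 ^ (b : ℕ) := Nat.pow_lt_pow_right (by norm_num) hlt
              rw [hxd]
              omega
            · -- b < c : x would be down-matched, contradicting up-matched
              exfalso
              obtain ⟨h'', heq2⟩ := tri A hSd₀ne (hmind₀ ▸ hbind₀) hcmem.1 (by rw [hmind₀]; exact hgt)
              obtain ⟨hSx, hminx⟩ := hupx
              apply hminx
              have h3 : (SS A x.1).min' hSx = b := by
                rw [← hmind₀, ← heq2]
                exact min'_congr hSx h'' (by rw [hxd])
              rw [h3, hxd]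
              exact Finset.mem_erase.mpr ⟨fun heq => hcb heq.symm, hbind₀⟩
        · -- x was in the old support
          have h1 : Nat.find hPex ≤ ww x.1 := hminw x hzx hupx
          have h15 : Nat.find hPex = ww u₀.1 := hu₀w.symm
          have h2 : x ≠ u₀ := by
            intro heq
            apply hx
            rw [heq]
            exact hz'u₀
          have h3 : ww x.1 ≠ ww u₀.1 := fun heq => h2 (Subtype.ext (ww_inj heq))
          omega
      obtain ⟨w', hw'⟩ := ih z' hz'cycle hbound'
      refine ⟨w' + w₀, ?_⟩
      rw [map_add, hw', hz'def]
      abel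
    · -- no up-matched support: apply step 2
      have hdn : ∀ x : {s : Finset (Fin r) // s ∈ (nerve A j).faces ∧ s.card = m + 1},
          z x ≠ 0 → ∃ h : (SS A x.1).Nonempty, (SS A x.1).min' h ∈ x.1 := by
        intro x hx
        have hxne : x.1.Nonempty := Finset.card_pos.mp (by rw [x.2.2]; omega)
        have hS : (SS A x.1).Nonempty :=
          SS_nonempty_of_big A j d hd2 x.2.1 hxne (by rw [x.2.2]; omega)
        refine ⟨hS, ?_⟩
        by_contra hnin
        exact hup ⟨x, hx, hS, hnin⟩
      have hz0 : z = 0 := step2 k A j d hd2 m hm z hz hdn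
      exact ⟨0, by rw [map_zero, hz0]⟩

end NerveVanish
open SComplex in
lemma NerveVanish.quot_ss {V : Type} [Fintype V] [DecidableEq V] (k : Type) [Field k]
    (N : SComplex V) (ℓ : ℕ)
    (h : cycles k N ℓ ≤ LinearMap.range (boundary k N ℓ)) :
    Subsingleton ↥(ModuleCat.of k ((cycles k N ℓ) ⧸
      (Submodule.comap (cycles k N ℓ).subtype (LinearMap.range (boundary k N ℓ))))) := by
  refine (Submodule.Quotient.subsingleton_iff).mpr ?_
  rw [Submodule.comap_subtype_eq_top]
  exact h

open SComplex in
/-- Part (1) of the Main Theorem: if `Δ` has dimension `d - 1`, then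
`H̃ᵢ(N_j(Δ)) = 0` for `i + j > d` and `1 ≤ j ≤ d`. -/
theorem higher_nerve_homology_vanishing
    {V : Type} [Fintype V] [DecidableEq V] (k : Type) [Field k]
    (K : SComplex V) {r : ℕ} (A : Fin r → Finset V) (hA : K.FacetEnum A)
    (d : ℕ) (hd : ∀ s ∈ K.faces, s.card ≤ d) (hd' : ∃ s ∈ K.faces, s.card = d)
    (i : ℤ) (j : ℕ) (hj1 : 1 ≤ j) (hjd : j ≤ d) (hij : (d : ℤ) < i + j) :
    Subsingleton ↥(Hred k (nerve A j) i) := by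
  classical
  have hd2 : ∀ a : Fin r, (A a).card ≤ d := fun a =>
    hd (A a) (((hA.2 (A a)).mpr ⟨a, rfl⟩).1)
  have hnlt : ¬ i < -1 := by omega
  rw [Hred, if_neg hnlt]
  apply NerveVanish.quot_ss
  have hn : (i + 1).toNat = i.toNat + 1 := by omega
  rw [hn]
  rw [show cycles k (nerve A j) (i.toNat + 1)
      = LinearMap.ker (boundary k (nerve A j) i.toNat) from rfl]
  intro z hz
  have hz' : boundary k (nerve A j) i.toNat z = 0 := LinearMap.mem_ker.mp hz
  obtain ⟨w, hw⟩ := NerveVanish.ind k A j d hd2 i.toNat (by omega)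
    (NerveVanish.ww (Finset.univ : Finset (Fin r)) + 1) z hz'
    (fun x hx hup => by omega)
  exact ⟨w, hw⟩
end

section
/- Let Δ be a simplicial complex of dimension d−1. Then for every i ≥ 0, the number of i-dimensional faces of Δ satisfies f_i(Δ) = Σ_{j=i+1}^{d} C(j−1, i) · χ(N_j(Δ)), where C(j−1,i) is a binomial coefficient. -/
set_option autoImplicit false
set_option maxHeartbeats 1000000
set_option synthInstance.maxHeartbeats 400000

private lemma hockey (i m : ℕ) :
    ∑ j ∈ Finset.Icc (i+1) m, (j-1).choose i = m.choose (i+1) := by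
  induction m with
  | zero => simp
  | succ n ih =>
    rcases le_or_gt (i+1) (n+1) with h | h
    · rw [Finset.sum_Icc_succ_top h, ih, Nat.choose_succ_succ]
      simp [Nat.add_comm]
    · rw [Finset.Icc_eq_empty (by omega), Finset.sum_empty,
        Nat.choose_eq_zero_of_lt (by omega)]

open Classical in
private lemma euler_eq' {V : Type} [Fintype V] (K : SComplex V) :
    SComplex.euler K =
      ∑ s ∈ Finset.univ.filter (fun s : Finset V => s ∈ K.faces ∧ s ≠ ∅),
        (-(-1:ℤ) ^ s.card) := by
  classical
  have hfv : ∀ h : ℕ, (SComplex.fvec K h : ℤ) =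
      ∑ s ∈ (Finset.univ : Finset (Finset V)),
        (if s ∈ K.faces ∧ s.card = h + 1 then (1:ℤ) else 0) := by
    intro h
    have hset : {s : Finset V | s ∈ K.faces ∧ s.card = h + 1} =
        ↑(Finset.univ.filter (fun s : Finset V => s ∈ K.faces ∧ s.card = h + 1)) := by
      ext s; simp
    rw [SComplex.fvec, hset, Set.ncard_coe_finset, Finset.card_filter]
    push_cast
    rfl
  rw [SComplex.euler]
  simp only [hfv, Finset.mul_sum]
  rw [Finset.sum_comm]
  rw [Finset.sum_filter]
  refine Finset.sum_congr rfl fun s _ => ?_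
  by_cases hf : s ∈ K.faces
  · by_cases he : s = ∅
    · subst he
      simp [Finset.card_empty]
    · have hr : s.card - 1 ∈ Finset.range (Fintype.card V + 1) := by
        have := Finset.card_le_univ s
        simp only [Finset.mem_range, Finset.card_univ] at *
        omega
      obtain ⟨k, hk⟩ : ∃ k, s.card = k + 1 :=
        Nat.exists_eq_succ_of_ne_zero (by
          simpa [Finset.card_eq_zero] using he)
      rw [Finset.sum_eq_single (s.card - 1)]
      · simp only [hf, true_and, hk, Nat.add_sub_cancel, if_pos rfl, mul_one, if_pos he]
        simp [pow_succ]
      · intro h _ hne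
        have : ¬ (s ∈ K.faces ∧ s.card = h + 1) := by
          rintro ⟨-, hc⟩; omega
        simp [this]
      · intro habs; exact absurd hr habs
  · simp [hf]

open SComplex in
/-- Part (3) of the Main Theorem: for `i ≥ 0`,
`f_i(Δ) = Σ_{j = i+1}^{d} C(j-1, i) · χ(N_j(Δ))`. -/
theorem fvec_eq_sum_nerve_euler
    {V : Type} [Fintype V] [DecidableEq V]
    (K : SComplex V) {r : ℕ} (A : Fin r → Finset V) (hA : K.FacetEnum A)
    (d : ℕ) (hd : ∀ s ∈ K.faces, s.card ≤ d) (hd' : ∃ s ∈ K.faces, s.card = d)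
    (i : ℕ) :
    (fvec K i : ℤ) =
      ∑ j ∈ Finset.Icc (i + 1) d, ((j - 1).choose i : ℤ) * euler (nerve A j) := by
  classical
  set m : Finset (Fin r) → ℕ :=
    fun F => if hF : F.Nonempty then (F.inf' hF A).card else 0 with hm
  have hfacet : ∀ a, A a ∈ K.faces := fun a => ((hA.2 (A a)).mpr ⟨a, rfl⟩).1
  have hmval : ∀ (F : Finset (Fin r)) (hF : F.Nonempty), m F = (F.inf' hF A).card := by
    intro F hF; simp [hm, dif_pos hF]
  have hmle : ∀ F : Finset (Fin r), F.Nonempty → m F ≤ d := by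
    intro F hFne
    obtain ⟨a, ha⟩ := hFne
    have hFne : F.Nonempty := ⟨a, ha⟩
    rw [hmval F hFne]
    exact hd _ (K.down_closed (hfacet a) (Finset.inf'_le A ha))
  have hface : ∀ s : Finset V, s ∈ K.faces ↔ ∃ a, s ⊆ A a := by
    intro s
    constructor
    · intro hs
      have hC : (Finset.univ.filter (fun t : Finset V => t ∈ K.faces ∧ s ⊆ t)).Nonempty :=
        ⟨s, by simp [hs]⟩
      obtain ⟨b, hb, hmax⟩ := Finset.exists_max_image _ Finset.card hC
      simp only [Finset.mem_filter, Finset.mem_univ, true_and] at hb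
      have hfb : K.IsFacet b := by
        refine ⟨hb.1, fun t ht hbt => ?_⟩
        have ht' : t ∈ Finset.univ.filter (fun t : Finset V => t ∈ K.faces ∧ s ⊆ t) := by
          simp [ht, hb.2.trans hbt]
        exact (Finset.eq_of_subset_of_card_le hbt (hmax t ht')).symm
      obtain ⟨a, ha⟩ := (hA.2 b).mp hfb
      exact ⟨a, ha ▸ hb.2⟩
    · rintro ⟨a, ha⟩
      exact K.down_closed (hfacet a) ha
  set E : Finset (Finset (Fin r)) := Finset.univ.filter (fun F => F ≠ ∅) with hE
  have hEul : ∀ j, euler (nerve A j) =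
      ∑ F ∈ E, (if j ≤ m F then -(-1:ℤ)^F.card else 0) := by
    intro j
    rw [euler_eq' (nerve A j)]
    rw [← Finset.sum_filter]
    congr 1
    ext F
    simp only [Finset.mem_filter, Finset.mem_univ, true_and, hE]
    constructor
    · rintro ⟨hmem, hne⟩
      have hFne : F.Nonempty := Finset.nonempty_iff_ne_empty.mpr hne
      have hle : j ≤ (F.inf' hFne A).card := hmem hFne
      exact ⟨hne, by rw [hmval F hFne]; exact hle⟩
    · rintro ⟨hne, hle⟩
      have hFne : F.Nonempty := Finset.nonempty_iff_ne_empty.mpr hne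
      rw [hmval F hFne] at hle
      exact ⟨fun hF' => hle, hne⟩
  set S : Finset (Finset V) := Finset.powersetCard (i+1) (Finset.univ : Finset V) with hS
  set G : Finset V → Finset (Fin r) := fun s => Finset.univ.filter (fun a => s ⊆ A a) with hG
  have step1 : ∑ j ∈ Finset.Icc (i + 1) d, ((j - 1).choose i : ℤ) * euler (nerve A j)
      = ∑ F ∈ E, (-(-1:ℤ)^F.card) * ((m F).choose (i+1) : ℤ) := by
    simp only [hEul, Finset.mul_sum]
    rw [Finset.sum_comm]
    refine Finset.sum_congr rfl fun F hF => ?_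
    have hFne : F.Nonempty := by
      simp only [hE, Finset.mem_filter] at hF
      exact Finset.nonempty_iff_ne_empty.mpr hF.2
    have hfil : (Finset.Icc (i+1) d).filter (fun j => j ≤ m F) = Finset.Icc (i+1) (m F) := by
      ext j
      simp only [Finset.mem_filter, Finset.mem_Icc]
      have := hmle F hFne
      omega
    calc ∑ j ∈ Finset.Icc (i+1) d, ((j-1).choose i : ℤ) * (if j ≤ m F then -(-1:ℤ)^F.card else 0)
        = ∑ j ∈ Finset.Icc (i+1) d,
            (if j ≤ m F then ((j-1).choose i : ℤ) * (-(-1:ℤ)^F.card) else 0) := by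
          refine Finset.sum_congr rfl fun j _ => ?_
          split <;> ring
      _ = ∑ j ∈ (Finset.Icc (i+1) d).filter (fun j => j ≤ m F),
            ((j-1).choose i : ℤ) * (-(-1:ℤ)^F.card) := (Finset.sum_filter _ _).symm
      _ = ∑ j ∈ Finset.Icc (i+1) (m F), ((j-1).choose i : ℤ) * (-(-1:ℤ)^F.card) := by
          rw [hfil]
      _ = (∑ j ∈ Finset.Icc (i+1) (m F), ((j-1).choose i : ℤ)) * (-(-1:ℤ)^F.card) := by
          rw [Finset.sum_mul]
      _ = ((m F).choose (i+1) : ℤ) * (-(-1:ℤ)^F.card) := by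
          rw [← Nat.cast_sum, hockey]
      _ = (-(-1:ℤ)^F.card) * ((m F).choose (i+1) : ℤ) := by ring
  have step2 : ∀ F ∈ E, ((m F).choose (i+1) : ℤ) =
      ∑ s ∈ S, (if F ⊆ G s then (1:ℤ) else 0) := by
    intro F hF
    have hFne : F.Nonempty := by
      simp only [hE, Finset.mem_filter] at hF
      exact Finset.nonempty_iff_ne_empty.mpr hF.2
    have key : S.filter (fun s => F ⊆ G s) = Finset.powersetCard (i+1) (F.inf' hFne A) := by
      ext s
      simp only [Finset.mem_filter, hS, Finset.mem_powersetCard]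
      constructor
      · rintro ⟨⟨-, hcard⟩, hsub⟩
        refine ⟨Finset.le_inf' hFne _ (fun a ha => ?_), hcard⟩
        have := hsub ha
        simp only [hG, Finset.mem_filter] at this
        exact this.2
      · rintro ⟨hsub, hcard⟩
        refine ⟨⟨Finset.subset_univ s, hcard⟩, fun a ha => ?_⟩
        simp only [hG, Finset.mem_filter, Finset.mem_univ, true_and]
        exact hsub.trans (Finset.inf'_le A ha)
    calc ((m F).choose (i+1) : ℤ)
        = (((F.inf' hFne A).card).choose (i+1) : ℤ) := by rw [hmval F hFne]
      _ = ((Finset.powersetCard (i+1) (F.inf' hFne A)).card : ℤ) := by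
          rw [Finset.card_powersetCard]
      _ = ((S.filter (fun s => F ⊆ G s)).card : ℤ) := by rw [key]
      _ = ∑ s ∈ S, (if F ⊆ G s then (1:ℤ) else 0) := by
          rw [Finset.card_filter]; push_cast; rfl
  have hinner : ∀ s : Finset V,
      ∑ F ∈ E, (if F ⊆ G s then -(-1:ℤ)^F.card else 0)
        = (if (G s) = ∅ then 0 else 1) := by
    intro s
    rw [← Finset.sum_filter]
    have hfe : E.filter (fun F => F ⊆ G s) = (G s).powerset.erase ∅ := by
      ext F
      simp only [hE, Finset.mem_filter, Finset.mem_univ, true_and, Finset.mem_erase,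
        Finset.mem_powerset]
    rw [hfe]
    have h2 : ∑ F ∈ (G s).powerset.erase ∅, (-(-1:ℤ)^F.card)
        = (∑ F ∈ (G s).powerset, (-(-1:ℤ)^F.card)) - (-(-1:ℤ)^(∅:Finset (Fin r)).card) := by
      rw [← Finset.sum_erase_add _ _ (Finset.empty_mem_powerset (G s))]
      ring
    rw [h2]
    rw [show (∑ F ∈ (G s).powerset, (-(-1:ℤ)^F.card))
        = -(∑ F ∈ (G s).powerset, ((-1:ℤ)^F.card)) by rw [← Finset.sum_neg_distrib]]
    rw [Finset.sum_powerset_neg_one_pow_card]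
    split <;> simp
  rw [step1]
  calc ((fvec K i : ℤ))
      = ((S.filter (fun s => s ∈ K.faces)).card : ℤ) := by
        rw [SComplex.fvec]
        have hset : {s : Finset V | s ∈ K.faces ∧ s.card = i+1}
            = ↑(S.filter (fun s => s ∈ K.faces)) := by
          ext s
          simp only [Set.mem_setOf_eq, Finset.coe_filter, hS, Finset.mem_powersetCard,
            Finset.subset_univ, true_and]
          tauto
        rw [hset, Set.ncard_coe_finset]
    _ = ∑ s ∈ S, (if s ∈ K.faces then (1:ℤ) else 0) := by
        rw [Finset.card_filter]; push_cast; rfl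
    _ = ∑ s ∈ S, (if (G s) = ∅ then 0 else 1) := by
        refine Finset.sum_congr rfl fun s _ => ?_
        by_cases hh : G s = ∅
        · have : ¬ (s ∈ K.faces) := by
            rw [hface s]
            rintro ⟨a, ha⟩
            have : a ∈ G s := by simp [hG, ha]
            rw [hh] at this
            exact absurd this (Finset.notMem_empty a)
          simp [hh, this]
        · have : s ∈ K.faces := by
            rw [hface s]
            obtain ⟨a, ha⟩ := Finset.nonempty_iff_ne_empty.mpr hh
            simp only [hG, Finset.mem_filter] at ha
            exact ⟨a, ha.2⟩
          simp [hh, this]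
    _ = ∑ s ∈ S, ∑ F ∈ E, (if F ⊆ G s then -(-1:ℤ)^F.card else 0) := by
        refine Finset.sum_congr rfl fun s _ => (hinner s).symm
    _ = ∑ F ∈ E, ∑ s ∈ S, (if F ⊆ G s then -(-1:ℤ)^F.card else 0) := Finset.sum_comm
    _ = ∑ F ∈ E, (-(-1:ℤ)^F.card) * ((m F).choose (i+1) : ℤ) := by
        refine Finset.sum_congr rfl fun F hF => ?_
        rw [step2 F hF, Finset.mul_sum]
        refine Finset.sum_congr rfl fun s _ => ?_
        split <;> ring
end

section
/- Let Δ be a simplicial complex and let i ≤ s(Δ). If the nerve complex N_i(Δ) is connected, then the 1-skeleton Δ^(1) is an i-connected graph, i.e., for every set S of vertices of Δ obtained by deleting at most i−1 vertices, the induced subcomplex Δ|_S is connected. -/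
set_option autoImplicit false
set_option maxHeartbeats 1000000
set_option synthInstance.maxHeartbeats 400000

lemma my_sdiff_nonempty_of_card_lt {V : Type} [DecidableEq V] {X J : Finset V}
    (h : J.card < X.card) : (X \ J).Nonempty := by
  rw [Finset.sdiff_nonempty]
  exact fun hsub => absurd (Finset.card_le_card hsub) (not_le.mpr h)

lemma my_exists_facet_superset {V : Type} [Fintype V] [DecidableEq V]
    (K : SComplex V) {s : Finset V} (hs : s ∈ K.faces) :
    ∃ t, K.IsFacet t ∧ s ⊆ t := by
  classical
  let F := Finset.univ.powerset.filter (fun t => t ∈ K.faces ∧ s ⊆ t)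
  have hF : s ∈ F := by simp [F, hs]
  obtain ⟨t, htF, hmax⟩ := F.exists_max_image (fun t => t.card) ⟨s, hF⟩
  simp only [F, Finset.mem_filter] at htF
  refine ⟨t, ⟨htF.2.1, ?_⟩, htF.2.2⟩
  intro u hu htu
  have huF : u ∈ F := by simp [F, hu, htF.2.2.trans htu]
  exact (Finset.eq_of_subset_of_card_le htu (hmax u huF)).symm

open SComplex in
/-- If `i ≤ s(Δ)` and `N_i(Δ)` is connected, then the `1`-skeleton of `Δ` is
an `i`-connected graph: removing at most `i - 1` vertices leaves the induced
subcomplex connected. -/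
theorem oneSkeleton_connected_of_nerve_connected
    {V : Type} [Fintype V] [DecidableEq V]
    (K : SComplex V) {r : ℕ} (A : Fin r → Finset V) (hA : K.FacetEnum A)
    (i : ℕ) (hi1 : 1 ≤ i) (hs : ∀ a : Fin r, i ≤ (A a).card)
    (hconn : Conn (nerve A i))
    (J : Finset V) (hJv : ∀ v ∈ J, ({v} : Finset V) ∈ K.faces)
    (hJcard : J.card < i) :
    Conn (K.restrict (↑J : Set V)ᶜ) := by
  classical
  have hfacet : ∀ a, K.IsFacet (A a) := fun a => (hA.2 (A a)).mpr ⟨a, rfl⟩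
  have hface : ∀ a, A a ∈ K.faces := fun a => (hfacet a).1
  have hne : ∀ a, (A a \ J).Nonempty := fun a =>
    my_sdiff_nonempty_of_card_lt (lt_of_lt_of_le hJcard (hs a))
  -- edges inside a facet
  have hedge : ∀ a : Fin r, ∀ v ∈ A a, ∀ w ∈ A a, v ∉ J → w ∉ J →
      ({v, w} : Finset V) ∈ (K.restrict (↑J : Set V)ᶜ).faces := by
    intro a v hv w hw hvJ hwJ
    constructor
    · refine K.down_closed (hface a) ?_
      intro x hx
      rcases Finset.mem_insert.mp hx with rfl | hx
      · exact hv
      · rw [Finset.mem_singleton.mp hx]; exact hw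
    · intro x hx
      simp only [Finset.coe_insert, Finset.coe_singleton, Set.mem_insert_iff,
        Set.mem_singleton_iff] at hx
      rcases hx with rfl | rfl <;> simpa
  -- intersection of adjacent facets meets the complement of J
  have hstepne : ∀ b c : Fin r,
      ({b, c} : Finset (Fin r)) ∈ (nerve A i).faces →
      ((A b ∩ A c) \ J).Nonempty := by
    intro b c hbc
    have hne2 : ({b, c} : Finset (Fin r)).Nonempty := ⟨b, by simp⟩
    have h1 := hbc hne2
    have heq : ({b, c} : Finset (Fin r)).inf' hne2 A = A b ∩ A c := by
      refine le_antisymm (Finset.subset_inter (Finset.inf'_le _ (by simp))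
        (Finset.inf'_le _ (by simp))) ?_
      rw [Finset.le_inf'_iff]
      intro x hx
      rcases Finset.mem_insert.mp hx with rfl | hx
      · exact Finset.inter_subset_left
      · rw [Finset.mem_singleton.mp hx]
        exact Finset.inter_subset_right
    rw [heq] at h1
    exact my_sdiff_nonempty_of_card_lt (lt_of_lt_of_le hJcard h1)
  -- main lifting lemma
  have main : ∀ a b : Fin r,
      Relation.ReflTransGen
        (fun x y => ({x, y} : Finset (Fin r)) ∈ (nerve A i).faces) a b →
      ∀ v ∈ A a, v ∉ J → ∀ w ∈ A b, w ∉ J →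
      Relation.ReflTransGen
        (fun x y => ({x, y} : Finset V) ∈ (K.restrict (↑J : Set V)ᶜ).faces) v w := by
    intro a b h
    induction h with
    | refl =>
      intro v hv hvJ w hw hwJ
      exact Relation.ReflTransGen.single (hedge a v hv w hw hvJ hwJ)
    | @tail b c _ hstep ih =>
      intro v hv hvJ w hw hwJ
      obtain ⟨u, hu⟩ := hstepne b c hstep
      rw [Finset.mem_sdiff, Finset.mem_inter] at hu
      exact (ih v hv hvJ u hu.1.1 hu.2).tail (hedge c u hu.1.2 w hw hu.2 hwJ)
  constructor
  · obtain ⟨a, _⟩ := hconn.1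
    obtain ⟨u, hu⟩ := hne a
    rw [Finset.mem_sdiff] at hu
    refine ⟨u, K.down_closed (hface a) (by simpa using hu.1), ?_⟩
    intro x hx
    simp only [Finset.coe_singleton, Set.mem_singleton_iff] at hx
    subst hx
    simpa using hu.2
  · intro v w hv hw
    have hvJ : v ∉ J := by simpa using hv.2 (Finset.mem_coe.mpr (Finset.mem_singleton_self v))
    have hwJ : w ∉ J := by simpa using hw.2 (Finset.mem_coe.mpr (Finset.mem_singleton_self w))
    obtain ⟨t, ht, hvt⟩ := my_exists_facet_superset K hv.1
    obtain ⟨a, rfl⟩ := (hA.2 t).mp ht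
    obtain ⟨t', ht', hwt⟩ := my_exists_facet_superset K hw.1
    obtain ⟨b, rfl⟩ := (hA.2 t').mp ht'
    have hanerve : ({a} : Finset (Fin r)) ∈ (nerve A i).faces := by
      intro hF
      rw [Finset.inf'_singleton]
      exact hs a
    have hbnerve : ({b} : Finset (Fin r)) ∈ (nerve A i).faces := by
      intro hF
      rw [Finset.inf'_singleton]
      exact hs b
    exact main a b (hconn.2 a b hanerve hbnerve)
      v (hvt (Finset.mem_singleton_self v)) hvJ
      w (hwt (Finset.mem_singleton_self w)) hwJ
end

section
/- Let Δ be a simplicial complex and let t = depth k[Δ]. Then the 1-skeleton Δ^(1) is a (t−1)-connected graph, i.e., for every set S of vertices of Δ obtained by deleting at most t−2 vertices, the induced subcomplex Δ|_S is connected. -/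
set_option autoImplicit false
set_option maxHeartbeats 1000000
set_option synthInstance.maxHeartbeats 400000

namespace DepthAux

open Finset Pointwise

variable {V : Type} [Fintype V] [DecidableEq V]

/-- an arbitrary linear order rank on `V`. -/
noncomputable def ordv (v : V) : ℕ := ((Fintype.equivFin V) v : ℕ)

lemma ordv_injective : Function.Injective (ordv (V := V)) := fun a b h =>
  (Fintype.equivFin V).injective (Fin.ext h)

variable (R : Type) [CommRing R]

/-- Koszul sign. -/
noncomputable def eps (v : V) (b : Finset V) : R :=
  (-1) ^ (b.filter (fun w => ordv w < ordv v)).card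

lemma eps_mul_self (v : V) (b : Finset V) : eps R v b * eps R v b = 1 := by
  rw [eps, ← pow_add, ← two_mul, pow_mul]
  simp

lemma eps_insert (v u : V) (b : Finset V) (hu : u ∉ b) :
    eps R v (insert u b) = (if ordv u < ordv v then (-1 : R) else 1) * eps R v b := by
  rw [eps, eps, filter_insert]
  split
  · rw [card_insert_of_notMem (by simp [hu]), pow_succ]
    ring
  · rw [one_mul]

lemma eps_swap (u v : V) (b : Finset V) (hu : u ∉ b) (hv : v ∉ b) (huv : u ≠ v) :
    eps R u b * eps R v (insert u b) = -(eps R v b * eps R u (insert v b)) := by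
  rw [eps_insert R v u b hu, eps_insert R u v b hv]
  have h : ordv u ≠ ordv v := fun h => huv (ordv_injective h)
  rcases lt_or_gt_of_ne h with h' | h'
  · rw [if_pos h', if_neg (by omega)]
    ring
  · rw [if_neg (by omega), if_pos h']
    ring

variable {R}
variable (x : V → R) (M : Type) [AddCommGroup M] [Module R M]

/-- The (index-free) Koszul differential. -/
noncomputable def kd : (Finset V → M) →ₗ[R] (Finset V → M) where
  toFun g := fun b => ∑ v ∈ bᶜ, (eps R v b * x v) • g (insert v b)
  map_add' g h := by
    funext b
    simp [smul_add, Finset.sum_add_distrib]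
  map_smul' c g := by
    funext b
    simp only [RingHom.id_apply, Pi.smul_apply, Finset.smul_sum]
    exact Finset.sum_congr rfl fun v _ => (smul_comm c _ _).symm

lemma kd_apply (g : Finset V → M) (b : Finset V) :
    kd x M g b = ∑ v ∈ bᶜ, (eps R v b * x v) • g (insert v b) := rfl

/-- contraction operator -/
noncomputable def ks (v : V) (g : Finset V → M) : Finset V → M :=
  fun b => if v ∈ b then eps R v (b.erase v) • g (b.erase v) else 0

lemma ks_apply (v : V) (g : Finset V → M) (b : Finset V) :
    ks (R := R) M v g b = if v ∈ b then eps R v (b.erase v) • g (b.erase v) else 0 := rfl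

lemma mem_smul_top_iff_ex (f : R) (m : M) :
    m ∈ f • (⊤ : Submodule R M) ↔ ∃ y, f • y = m := by
  rw [← SetLike.mem_coe, Submodule.coe_pointwise_smul, Set.mem_smul_set]
  simp

lemma kd_kd (g : Finset V → M) : kd x M (kd x M g) = 0 := by
  funext b
  show (∑ u ∈ bᶜ, (eps R u b * x u) •
      (∑ v ∈ (insert u b)ᶜ, (eps R v (insert u b) * x v) • g (insert v (insert u b)))) = 0
  have h1 : ∀ u ∈ bᶜ, (eps R u b * x u) •
      (∑ v ∈ (insert u b)ᶜ, (eps R v (insert u b) * x v) • g (insert v (insert u b)))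
      = ∑ v ∈ bᶜ, (if v = u then 0 else
          ((eps R u b * x u) * (eps R v (insert u b) * x v)) • g (insert v (insert u b))) := by
    intro u hu
    rw [Finset.smul_sum, compl_insert]
    rw [← Finset.sum_erase_add bᶜ _ hu, if_pos rfl, add_zero]
    refine Finset.sum_congr rfl fun v hv => ?_
    rw [if_neg (Finset.ne_of_mem_erase hv), smul_smul]
  rw [Finset.sum_congr rfl h1, ← Finset.sum_product']
  refine Finset.sum_involution (fun p _ => (p.2, p.1)) ?_ ?_ ?_ ?_
  · rintro ⟨u, v⟩ hp
    by_cases huv : v = u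
    · subst huv; simp
    · have hu : u ∉ b := Finset.mem_compl.mp (Finset.mem_product.mp hp).1
      have hv : v ∉ b := Finset.mem_compl.mp (Finset.mem_product.mp hp).2
      rw [if_neg huv, if_neg (fun h => huv (h.symm)), Finset.insert_comm, ← add_smul]
      have hs := eps_swap R u v b hu hv (fun h => huv h.symm)
      have hAB : eps R u b * x u * (eps R v (insert u b) * x v)
            + eps R v b * x v * (eps R u (insert v b) * x u) = 0 := by
        calc eps R u b * x u * (eps R v (insert u b) * x v)
              + eps R v b * x v * (eps R u (insert v b) * x u)
            = (eps R u b * eps R v (insert u b)) * (x u * x v)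
              + (eps R v b * eps R u (insert v b)) * (x u * x v) := by ring
          _ = 0 := by rw [hs]; ring
      rw [hAB, zero_smul]
  · rintro ⟨u, v⟩ hp hne h
    have hvu : v = u := congrArg Prod.fst h
    exact hne (if_pos hvu)
  · rintro ⟨u, v⟩ hp
    exact Finset.mem_product.mpr ⟨(Finset.mem_product.mp hp).2, (Finset.mem_product.mp hp).1⟩
  · rintro ⟨u, v⟩ _
    rfl

lemma kd_ks (v : V) (z : Finset V → M) (hz : kd x M z = 0) :
    kd x M (ks (R := R) M v z) = x v • z := by
  funext b
  show (∑ u ∈ bᶜ, (eps R u b * x u) • (ks (R := R) M v z (insert u b))) = x v • z b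
  by_cases hv : v ∈ b
  · -- v ∈ b
    have h0 := congrFun hz (b.erase v)
    rw [kd_apply, compl_erase, Finset.sum_insert (by simp [hv]), Finset.insert_erase hv] at h0
    have key : ∀ u ∈ bᶜ, (eps R u b * x u) • (ks (R := R) M v z (insert u b))
        = (-eps R v (b.erase v)) • ((eps R u (b.erase v) * x u) • z (insert u (b.erase v))) := by
      intro u hu
      have hub : u ∉ b := Finset.mem_compl.mp hu
      have huv : u ≠ v := fun h => hub (h ▸ hv)
      have hvin : v ∈ insert u b := Finset.mem_insert_of_mem hv
      rw [ks_apply, if_pos hvin, Finset.erase_insert_of_ne huv]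
      have hueb : u ∉ b.erase v := fun h => hub (Finset.mem_of_mem_erase h)
      have hveb : v ∉ b.erase v := Finset.notMem_erase v b
      have e1 : eps R u b = (if ordv v < ordv u then (-1:R) else 1) * eps R u (b.erase v) := by
        conv_lhs => rw [← Finset.insert_erase hv]
        rw [eps_insert R u v (b.erase v) hveb]
      have e2 : eps R v (insert u (b.erase v))
          = (if ordv u < ordv v then (-1:R) else 1) * eps R v (b.erase v) := by
        rw [eps_insert R v u (b.erase v) hueb]
      rw [smul_smul, smul_smul]
      congr 1
      rw [e1, e2]
      have hord : ordv u ≠ ordv v := fun h => huv (ordv_injective h)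
      rcases lt_or_gt_of_ne hord with h' | h'
      · rw [if_pos h', if_neg (by omega)]; ring
      · rw [if_pos h', if_neg (by omega)]; ring
    rw [Finset.sum_congr rfl key, ← Finset.smul_sum]
    have h2 : (∑ u ∈ bᶜ, (eps R u (b.erase v) * x u) • z (insert u (b.erase v)))
        = -((eps R v (b.erase v) * x v) • z b) := by
      exact eq_neg_of_add_eq_zero_right h0
    rw [h2, smul_neg, neg_smul, neg_neg, smul_smul]
    rw [show eps R v (b.erase v) * (eps R v (b.erase v) * x v) =
      (eps R v (b.erase v) * eps R v (b.erase v)) * x v by ring, eps_mul_self, one_mul]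
  · -- v ∉ b
    rw [Finset.sum_eq_single_of_mem v (Finset.mem_compl.mpr hv) ?side]
    · rw [ks_apply, if_pos (Finset.mem_insert_self v b), Finset.erase_insert hv, smul_smul]
      rw [show eps R v b * x v * eps R v b = (eps R v b * eps R v b) * x v by ring,
        eps_mul_self, one_mul]
    case side =>
      intro u hu hne
      rw [ks_apply, if_neg ?_, smul_zero]
      intro hmem
      rcases Finset.mem_insert.mp hmem with h | h
      · exact hne h.symm
      · exact hv h

variable (M₂ : Type) [AddCommGroup M₂] [Module R M₂]

lemma kd_map (φ : M →ₗ[R] M₂) (g : Finset V → M) :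
    kd x M₂ (fun b => φ (g b)) = fun b => φ (kd x M g b) := by
  funext b
  rw [kd_apply, kd_apply, map_sum]
  exact Finset.sum_congr rfl fun u _ => (map_smul φ _ _).symm

lemma smul_cycle_mem_range (f : R) (hf : f ∈ Ideal.span (Set.range x)) (z : Finset V → M)
    (hz : kd x M z = 0) : f • z ∈ LinearMap.range (kd x M) := by
  let T : Ideal R :=
    { carrier := {r | r • z ∈ LinearMap.range (kd x M)}
      add_mem' := fun {a b} ha hb => by
        simp only [Set.mem_setOf_eq] at *
        rw [add_smul]
        exact Submodule.add_mem _ ha hb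
      zero_mem' := by
        simp only [Set.mem_setOf_eq, zero_smul]
        exact Submodule.zero_mem _
      smul_mem' := fun c r hr => by
        simp only [Set.mem_setOf_eq] at *
        rw [smul_eq_mul, mul_smul]
        exact Submodule.smul_mem _ c hr }
  have hle : Ideal.span (Set.range x) ≤ T := by
    rw [Ideal.span_le]
    rintro _ ⟨v, rfl⟩
    exact ⟨ks (R := R) M v z, kd_ks x M v z hz⟩
  exact hle hf

open RingTheory.Sequence in
lemma thmA (x : V → R) : ∀ (rs : List R) (M : Type) [AddCommGroup M] [Module R M],
    (∀ r ∈ rs, r ∈ Ideal.span (Set.range x)) → IsWeaklyRegular M rs →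
    ∀ z : Finset V → M, kd x M z = 0 →
    (∀ b : Finset V, b.card + rs.length ≤ Fintype.card V → z b = 0) →
    z ∈ LinearMap.range (kd x M) := by
  intro rs
  induction rs with
  | nil =>
    intro M _ _ _ _ z hz hcut
    have hz0 : z = 0 := funext fun b => hcut b (by simpa using Finset.card_le_univ b)
    exact hz0 ▸ Submodule.zero_mem _
  | cons f rs ih =>
    intro M _ _ hmem hreg z hz hcut
    obtain ⟨hf, hreg'⟩ := (isWeaklyRegular_cons_iff M f rs).mp hreg
    obtain ⟨w, hw⟩ := smul_cycle_mem_range x M f (hmem f List.mem_cons_self) z hz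
    set N := Fintype.card V with hN
    set w' : Finset V → M := fun b => if N < b.card + rs.length then w b else 0 with hw'def
    have hdw' : kd x M w' = f • z := by
      funext b
      rw [Pi.smul_apply]
      by_cases hb : b.card + rs.length < N
      · have h1 : kd x M w' b = 0 := by
          rw [kd_apply]
          refine Finset.sum_eq_zero fun u hu => ?_
          have h2 : w' (insert u b) = 0 := by
            show (if N < (insert u b).card + rs.length then w (insert u b) else 0) = 0
            rw [Finset.card_insert_of_notMem (Finset.mem_compl.mp hu), if_neg (by omega)]
          rw [h2, smul_zero]
        rw [h1, hcut b (by simp only [List.length_cons]; omega), smul_zero]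
      · have h1 : ∀ u ∈ bᶜ, w' (insert u b) = w (insert u b) := fun u hu => by
          show (if N < (insert u b).card + rs.length then w (insert u b) else 0) = _
          rw [Finset.card_insert_of_notMem (Finset.mem_compl.mp hu), if_pos (by omega)]
        have h3 : kd x M w' b = kd x M w b := by
          rw [kd_apply, kd_apply]
          exact Finset.sum_congr rfl fun u hu => by rw [h1 u hu]
        rw [h3, hw]
        rfl
    have hcyc : kd x (QuotSMulTop f M) (fun b => Submodule.mkQ (f • ⊤) (w' b)) = 0 := by
      rw [kd_map x M (QuotSMulTop f M) (Submodule.mkQ (f • ⊤)) w']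
      funext b
      rw [hdw']
      show Submodule.mkQ (f • ⊤) ((f • z) b) = 0
      rw [Pi.smul_apply, Submodule.mkQ_apply, Submodule.Quotient.mk_eq_zero]
      exact Submodule.smul_mem_pointwise_smul _ _ _ Submodule.mem_top
    have hcut' : ∀ b : Finset V, b.card + rs.length ≤ N →
        Submodule.mkQ (f • (⊤ : Submodule R M)) (w' b) = 0 := fun b hb => by
      have h2 : w' b = 0 := by
        show (if N < b.card + rs.length then w b else 0) = 0
        rw [if_neg (by omega)]
      rw [h2, map_zero]
    obtain ⟨ubar, hubar⟩ := ih (QuotSMulTop f M)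
      (fun r hr => hmem r (List.mem_cons_of_mem f hr)) hreg' _ hcyc hcut'
    choose uu huu using fun b => Submodule.mkQ_surjective (f • (⊤ : Submodule R M)) (ubar b)
    have hπδ : ∀ b, (w' - kd x M uu) b ∈ f • (⊤ : Submodule R M) := by
      intro b
      have h4 : (fun b => Submodule.mkQ (f • (⊤ : Submodule R M)) (uu b)) = ubar :=
        funext huu
      have h5 : Submodule.mkQ (f • (⊤ : Submodule R M)) (kd x M uu b)
          = Submodule.mkQ (f • ⊤) (w' b) := by
        have := congrFun (kd_map x M (QuotSMulTop f M) (Submodule.mkQ (f • ⊤)) uu) b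
        rw [← this, h4, hubar]
      have h6 : Submodule.mkQ (f • (⊤ : Submodule R M)) ((w' - kd x M uu) b) = 0 := by
        rw [Pi.sub_apply, map_sub, h5, sub_self]
      rw [Submodule.mkQ_apply, Submodule.Quotient.mk_eq_zero] at h6
      exact h6
    choose w'' hw'' using fun b => (mem_smul_top_iff_ex M f _).mp (hπδ b)
    refine ⟨w'', ?_⟩
    have h7 : f • (kd x M w'') = f • z := by
      calc f • kd x M w'' = kd x M (f • w'') := (map_smul (kd x M) f w'').symm
        _ = kd x M (w' - kd x M uu) := by
              congr 1
              funext b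
              exact hw'' b
        _ = kd x M w' - kd x M (kd x M uu) := map_sub _ _ _
        _ = f • z - 0 := by rw [hdw', kd_kd]
        _ = f • z := sub_zero _
    funext b
    exact hf (congrFun h7 b)


section SRPart

open SComplex MvPolynomial Finset

variable {V : Type} [Fintype V] [DecidableEq V] (k : Type) [Field k] (K : SComplex V)

lemma eps_hom {R R' : Type} [CommRing R] [CommRing R'] (φ : R →+* R') (v : V) (b : Finset V) :
    φ (eps R v b) = eps R' v b := by
  rw [eps, eps, map_pow, map_neg, map_one]

lemma supp_sum_single (s : Finset V) : (∑ v ∈ s, Finsupp.single v (1 : ℕ)).support = s := by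
  induction s using Finset.induction_on with
  | empty => simp
  | @insert a s ha ih =>
    rw [Finset.sum_insert ha, Finsupp.support_add_eq, ih,
      Finsupp.support_single_ne_zero a one_ne_zero, ← Finset.insert_eq]
    rw [Finsupp.support_single_ne_zero a one_ne_zero, ih]
    simpa using ha

lemma prod_X_eq (s : Finset V) :
    (∏ v ∈ s, (X v : MvPolynomial V k)) = monomial (∑ v ∈ s, Finsupp.single v 1) 1 := by
  induction s using Finset.induction_on with
  | empty => simp
  | @insert a s ha ih =>
    rw [Finset.prod_insert ha, Finset.sum_insert ha, ih, X, monomial_mul, mul_one]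

lemma coeff_srIdeal {f : MvPolynomial V k} (hf : f ∈ srIdeal k K) :
    ∀ d : V →₀ ℕ, d.support ∈ K.faces → coeff d f = 0 := by
  classical
  let T : Ideal (MvPolynomial V k) :=
  { carrier := {g | ∀ d : V →₀ ℕ, d.support ∈ K.faces → coeff d g = 0}
    add_mem' := fun {a b} ha hb d hd => by
      rw [coeff_add, ha d hd, hb d hd, add_zero]
    zero_mem' := fun d hd => coeff_zero d
    smul_mem' := fun c g hg d hd => by
      rw [smul_eq_mul, coeff_mul]
      refine Finset.sum_eq_zero fun pq hpq => ?_
      have h1 : pq.1 + pq.2 = d := Finset.HasAntidiagonal.mem_antidiagonal.mp hpq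
      have h2 : pq.2 ≤ d := h1 ▸ self_le_add_left pq.2 pq.1
      rw [hg pq.2 (K.down_closed hd (Finsupp.support_mono h2)), mul_zero] }
  have hle : srIdeal k K ≤ T := by
    rw [srIdeal, Ideal.span_le]
    rintro g ⟨s, hs, rfl⟩
    intro d hd
    rw [prod_X_eq, coeff_monomial, if_neg]
    intro h
    rw [← h, supp_sum_single] at hd
    exact hs hd
  exact hle hf

lemma mk_prod_eq_zero {s : Finset V} (hs : s ∉ K.faces) :
    Ideal.Quotient.mk (srIdeal k K) (∏ v ∈ s, X v) = 0 :=
  Ideal.Quotient.eq_zero_iff_mem.mpr (Ideal.subset_span ⟨s, hs, rfl⟩)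

lemma mk_X_eq_zero {v : V} (h : ({v} : Finset V) ∉ K.faces) :
    Ideal.Quotient.mk (srIdeal k K) (X v) = 0 := by
  have := mk_prod_eq_zero k K h
  rwa [Finset.prod_singleton] at this

lemma mk_X_mul_X_eq_zero {u v : V} (huv : u ≠ v) (h : ({u, v} : Finset V) ∉ K.faces) :
    Ideal.Quotient.mk (srIdeal k K) (X u * X v) = 0 := by
  have := mk_prod_eq_zero k K h
  rwa [Finset.prod_pair huv] at this

/-- the variable images in the Stanley-Reisner ring -/
noncomputable abbrev xq : V → srRing k K := fun v => Ideal.Quotient.mk (srIdeal k K) (X v)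

lemma xq_mul_xq_eq_zero {u v : V} (hu : u ∉ (↑({u, v} : Finset V) : Set V) → False)
    (huv : u ≠ v) (h : ({u, v} : Finset V) ∉ K.faces) :
    xq k K u * xq k K v = 0 := by
  rw [xq, xq, ← map_mul]
  exact mk_X_mul_X_eq_zero k K huv h

/-- Case "no vertex outside J": no long regular sequences. -/
lemma lemE (J : Finset V) (hJ : ∀ v, v ∉ J → ({v} : Finset V) ∉ K.faces)
    (rs : List (srRing k K))
    (hmem : ∀ r ∈ rs, r ∈ Ideal.span (Set.range (xq k K)))
    (hreg : RingTheory.Sequence.IsWeaklyRegular (srRing k K) rs) :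
    rs.length ≤ J.card := by
  by_contra hlen
  push_neg at hlen
  set x : V → srRing k K := xq k K with hx
  set z : Finset V → srRing k K := fun b => if b = Jᶜ then 1 else 0 with hzdef
  have hcyc : kd x (srRing k K) z = 0 := by
    funext b
    rw [kd_apply]
    refine Finset.sum_eq_zero fun u _ => ?_
    show (eps (srRing k K) u b * x u) • (if insert u b = Jᶜ then (1 : srRing k K) else 0) = 0
    by_cases h : insert u b = Jᶜ
    · have hu' : u ∉ J := Finset.mem_compl.mp (h ▸ Finset.mem_insert_self u b)
      have hxu : x u = 0 := mk_X_eq_zero k K (hJ u hu')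
      rw [hxu, mul_zero, zero_smul]
    · rw [if_neg h, smul_zero]
  have hcut : ∀ b : Finset V, b.card + rs.length ≤ Fintype.card V → z b = 0 := by
    intro b hb
    show (if b = Jᶜ then (1 : srRing k K) else 0) = 0
    rw [if_neg]
    intro h
    subst h
    rw [Finset.card_compl] at hb
    have h3 := Finset.card_le_univ J
    omega
  obtain ⟨w, hwz⟩ := thmA x rs (srRing k K) hmem hreg z hcyc hcut
  have he := congrFun hwz Jᶜ
  rw [kd_apply, compl_compl] at he
  have hz1 : z Jᶜ = 1 := by
    show (if (Jᶜ : Finset V) = Jᶜ then (1 : srRing k K) else 0) = 1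
    rw [if_pos rfl]
  rw [hz1] at he
  choose W hW using fun b => Ideal.Quotient.mk_surjective (I := srIdeal k K) (w b)
  set P : MvPolynomial V k :=
    ∑ u ∈ J, eps (MvPolynomial V k) u Jᶜ * X u * W (insert u Jᶜ) with hP
  have hmkP : Ideal.Quotient.mk (srIdeal k K) P = 1 := by
    rw [hP, map_sum, ← he]
    refine Finset.sum_congr rfl fun u _ => ?_
    rw [map_mul, map_mul, eps_hom, hW, smul_eq_mul]
  have hmem2 : P - 1 ∈ srIdeal k K := by
    rw [← Ideal.Quotient.eq_zero_iff_mem, map_sub, hmkP, map_one, sub_self]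
  have hc := coeff_srIdeal k K hmem2 0 (by rw [Finsupp.support_zero]; exact K.empty_mem)
  rw [coeff_sub, coeff_zero_one, hP] at hc
  have hcP : coeff (0 : V →₀ ℕ)
      (∑ u ∈ J, eps (MvPolynomial V k) u Jᶜ * X u * W (insert u Jᶜ)) = 0 := by
    rw [MvPolynomial.coeff_sum]
    refine Finset.sum_eq_zero fun u _ => ?_
    rw [← eps_hom (C : k →+* MvPolynomial V k), mul_assoc, coeff_C_mul, coeff_X_mul']
    rw [Finsupp.support_zero]
    rw [if_neg (Finset.notMem_empty u), mul_zero]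
  rw [hcP] at hc
  norm_num at hc

lemma coeff_single_X_mul (r u : V) (W : MvPolynomial V k) (hru : u ≠ r) :
    coeff (Finsupp.single r 1) (X u * W) = 0 := by
  rw [coeff_X_mul', Finsupp.support_single_ne_zero r one_ne_zero,
    if_neg (by simp [hru])]

lemma coeff_single_X_mul_self (r : V) (W : MvPolynomial V k) :
    coeff (Finsupp.single r 1) (X r * W) = coeff 0 W := by
  rw [coeff_X_mul', Finsupp.support_single_ne_zero r one_ne_zero,
    if_pos (Finset.mem_singleton_self r), tsub_self]

/-- Case "two vertices outside J not joined by a path": no long regular sequences. -/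
lemma lemD (J : Finset V) (p q : V) (hpJ : p ∉ J) (hqJ : q ∉ J)
    (hpf : ({p} : Finset V) ∈ K.faces) (hqf : ({q} : Finset V) ∈ K.faces)
    (hnopath : ¬ Relation.ReflTransGen
      (fun a b => ({a, b} : Finset V) ∈ (K.restrict (↑J : Set V)ᶜ).faces) p q)
    (rs : List (srRing k K))
    (hmem : ∀ r ∈ rs, r ∈ Ideal.span (Set.range (xq k K)))
    (hreg : RingTheory.Sequence.IsWeaklyRegular (srRing k K) rs) :
    rs.length ≤ J.card + 1 := by
  classical
  by_contra hlen
  push_neg at hlen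
  set x : V → srRing k K := xq k K with hx
  set U : Finset V := Jᶜ with hU
  have hpU : p ∈ U := Finset.mem_compl.mpr hpJ
  have hqU : q ∈ U := Finset.mem_compl.mpr hqJ
  set P : Finset V := U.filter (fun u => ({u} : Finset V) ∈ K.faces ∧ Relation.ReflTransGen
      (fun a b => ({a, b} : Finset V) ∈ (K.restrict (↑J : Set V)ᶜ).faces) p u) with hPdef
  have hpP : p ∈ P := Finset.mem_filter.mpr ⟨hpU, hpf, Relation.ReflTransGen.refl⟩
  have hqP : q ∉ P := fun h => hnopath (Finset.mem_filter.mp h).2.2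
  have hstep : ∀ u v : V, u ∈ P → v ∈ U → ({u, v} : Finset V) ∈ K.faces → v ∈ P := by
    intro u v hu hv hface
    obtain ⟨huU, huf, hupath⟩ := Finset.mem_filter.mp hu
    refine Finset.mem_filter.mpr ⟨hv, K.down_closed hface (by simp), hupath.tail ?_⟩
    refine ⟨hface, ?_⟩
    intro w hw
    simp only [Finset.coe_insert, Set.mem_insert_iff, Finset.coe_singleton,
      Set.mem_singleton_iff] at hw
    rcases hw with rfl | rfl
    · simpa using Finset.mem_compl.mp huU
    · simpa using Finset.mem_compl.mp hv
  have hcut0 : ∀ u v : V, u ∈ U → v ∈ P → u ∉ P → u ≠ v → x u * x v = 0 := by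
    intro u v hu hv hunP huv
    have hface : ({u, v} : Finset V) ∉ K.faces := by
      intro hface
      exact hunP (hstep v u hv hu (by rwa [Finset.pair_comm]))
    rw [hx]
    show Ideal.Quotient.mk _ (X u) * Ideal.Quotient.mk _ (X v) = 0
    rw [← map_mul]
    exact mk_X_mul_X_eq_zero k K huv hface
  set z : Finset V → srRing k K := fun b =>
    ∑ v ∈ P, if b = U.erase v then eps (srRing k K) v (U.erase v) * x v else 0 with hzdef
  have hcyc : kd x (srRing k K) z = 0 := by
    funext b
    rw [kd_apply]
    have hsum : ∀ u ∈ bᶜ, (eps (srRing k K) u b * x u) • z (insert u b)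
        = ∑ v ∈ P, (if insert u b = U.erase v then
            (eps (srRing k K) u b * x u) * (eps (srRing k K) v (U.erase v) * x v) else 0) := by
      intro u _
      show (eps (srRing k K) u b * x u) •
          (∑ v ∈ P, if insert u b = U.erase v
            then eps (srRing k K) v (U.erase v) * x v else 0) = _
      rw [Finset.smul_sum]
      refine Finset.sum_congr rfl fun v _ => ?_
      split
      · rw [smul_eq_mul]
      · rw [smul_zero]
    rw [Finset.sum_congr rfl hsum, ← Finset.sum_product']
    refine Finset.sum_involution
      (fun pr _ => if pr.2 ∈ bᶜ ∧ pr.1 ∈ P then (pr.2, pr.1) else pr) ?_ ?_ ?_ ?_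
    · rintro ⟨u, v⟩ hpr
      dsimp only
      have hu : u ∈ bᶜ := (Finset.mem_product.mp hpr).1
      have hv : v ∈ P := (Finset.mem_product.mp hpr).2
      by_cases hcond : v ∈ bᶜ ∧ u ∈ P
      · rw [if_pos hcond]
        by_cases hins : insert u b = U.erase v
        · have hunb : u ∉ b := Finset.mem_compl.mp hu
          have huv : u ≠ v := (Finset.mem_erase.mp (hins ▸ Finset.mem_insert_self u b)).1
          have hvU : v ∈ U := (Finset.mem_filter.mp hv).1
          have hvnb : v ∉ b := Finset.mem_compl.mp hcond.1
          have hins' : insert v b = U.erase u := by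
            have h1 : (U : Finset V) = insert v (insert u b) := by
              rw [hins, Finset.insert_erase hvU]
            rw [h1, Finset.insert_comm, Finset.erase_insert ?_]
            intro hmem'
            rcases Finset.mem_insert.mp hmem' with h | h
            · exact huv h
            · exact hunb h
          rw [if_pos hins, if_pos hins', ← hins, ← hins']
          have hs := eps_swap (srRing k K) u v b hunb hvnb huv
          calc (eps (srRing k K) u b * x u) * (eps (srRing k K) v (insert u b) * x v)
                + (eps (srRing k K) v b * x v) * (eps (srRing k K) u (insert v b) * x u)
              = (eps (srRing k K) u b * eps (srRing k K) v (insert u b)) * (x u * x v)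
                + (eps (srRing k K) v b * eps (srRing k K) u (insert v b)) * (x u * x v) := by
                ring
            _ = 0 := by rw [hs]; ring
        · have hins' : ¬ (insert v b = U.erase u) := by
            intro h'
            have hvnb : v ∉ b := Finset.mem_compl.mp hcond.1
            have hvu : v ≠ u := (Finset.mem_erase.mp (h' ▸ Finset.mem_insert_self v b)).1
            have huU : u ∈ U := (Finset.mem_filter.mp hcond.2).1
            have hunb : u ∉ b := Finset.mem_compl.mp hu
            refine hins ?_
            have h1 : (U : Finset V) = insert u (insert v b) := by
              rw [h', Finset.insert_erase huU]
            rw [h1, Finset.insert_comm, Finset.erase_insert ?_]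
            intro hmem'
            rcases Finset.mem_insert.mp hmem' with h | h
            · exact hvu h
            · exact hvnb h
          rw [if_neg hins, if_neg hins', add_zero]
      · rw [if_neg hcond]
        have hF : (if insert u b = U.erase v then
            (eps (srRing k K) u b * x u) * (eps (srRing k K) v (U.erase v) * x v) else 0) = 0 := by
          by_cases hins : insert u b = U.erase v
          · rw [if_pos hins]
            have hvnb : v ∉ b := fun hvb =>
              (Finset.notMem_erase v U) (hins ▸ Finset.mem_insert_of_mem hvb)
            have hvbc : v ∈ bᶜ := Finset.mem_compl.mpr hvnb
            have hunP : u ∉ P := fun huP => hcond ⟨hvbc, huP⟩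
            have huU : u ∈ U := Finset.mem_of_mem_erase (hins ▸ Finset.mem_insert_self u b)
            have huv : u ≠ v := (Finset.mem_erase.mp (hins ▸ Finset.mem_insert_self u b)).1
            have h0 : x u * x v = 0 := hcut0 u v huU hv hunP huv
            calc (eps (srRing k K) u b * x u) * (eps (srRing k K) v (U.erase v) * x v)
                = (eps (srRing k K) u b * eps (srRing k K) v (U.erase v)) * (x u * x v) := by
                  ring
              _ = 0 := by rw [h0, mul_zero]
          · rw [if_neg hins]
        rw [hF, add_zero]
    · rintro ⟨u, v⟩ hpr hne
      dsimp only at hne ⊢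
      have hv : v ∈ P := (Finset.mem_product.mp hpr).2
      have hins : insert u b = U.erase v := by
        by_contra h
        exact hne (if_neg h)
      have huv : u ≠ v := (Finset.mem_erase.mp (hins ▸ Finset.mem_insert_self u b)).1
      have hvnb : v ∉ b := fun hvb =>
        (Finset.notMem_erase v U) (hins ▸ Finset.mem_insert_of_mem hvb)
      have hvbc : v ∈ bᶜ := Finset.mem_compl.mpr hvnb
      have huU : u ∈ U := Finset.mem_of_mem_erase (hins ▸ Finset.mem_insert_self u b)
      have huP : u ∈ P := by
        by_contra hunP
        refine hne ?_
        rw [if_pos hins]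
        have h0 : x u * x v = 0 := hcut0 u v huU hv hunP huv
        calc (eps (srRing k K) u b * x u) * (eps (srRing k K) v (U.erase v) * x v)
            = (eps (srRing k K) u b * eps (srRing k K) v (U.erase v)) * (x u * x v) := by ring
          _ = 0 := by rw [h0, mul_zero]
      rw [if_pos ⟨hvbc, huP⟩]
      intro heq
      exact huv ((congrArg Prod.snd heq) : u = v)
    · rintro ⟨u, v⟩ hpr
      dsimp only
      split
      · next hcond => exact Finset.mem_product.mpr ⟨hcond.1, hcond.2⟩
      · exact hpr
    · rintro ⟨u, v⟩ hpr
      have hu : u ∈ bᶜ := (Finset.mem_product.mp hpr).1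
      have hv : v ∈ P := (Finset.mem_product.mp hpr).2
      dsimp only
      by_cases hcond : v ∈ bᶜ ∧ u ∈ P
      · rw [if_pos hcond, if_pos ⟨hu, hv⟩]
      · rw [if_neg hcond, if_neg hcond]
  have hcut : ∀ b : Finset V, b.card + rs.length ≤ Fintype.card V → z b = 0 := by
    intro b hb
    show (∑ v ∈ P, if b = U.erase v
        then eps (srRing k K) v (U.erase v) * x v else 0) = 0
    refine Finset.sum_eq_zero fun v hv => ?_
    rw [if_neg]
    intro h
    have hvU : v ∈ U := (Finset.mem_filter.mp hv).1
    rw [h, Finset.card_erase_of_mem hvU, hU, Finset.card_compl] at hb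
    have h3 := Finset.card_le_univ J
    omega
  obtain ⟨w, hwz⟩ := thmA x rs (srRing k K) hmem hreg z hcyc hcut
  choose W hW using fun b => Ideal.Quotient.mk_surjective (I := srIdeal k K) (w b)
  have heval : ∀ r : V, r ∈ U →
      z (U.erase r) = (eps (srRing k K) r (U.erase r) * x r) * w U
        + ∑ u ∈ J, (eps (srRing k K) u (U.erase r) * x u) * w (insert u (U.erase r)) := by
    intro r hr
    have he := congrFun hwz (U.erase r)
    rw [kd_apply] at he
    rw [← he]
    have hcompl : (U.erase r)ᶜ = insert r J := by
      rw [Finset.compl_erase, hU, compl_compl]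
    rw [hcompl, Finset.sum_insert (Finset.mem_compl.mp (hU ▸ hr)), Finset.insert_erase hr]
    simp only [smul_eq_mul]
  have hzp : z (U.erase p) = eps (srRing k K) p (U.erase p) * x p := by
    show (∑ v ∈ P, if U.erase p = U.erase v
        then eps (srRing k K) v (U.erase v) * x v else 0) = _
    rw [Finset.sum_eq_single_of_mem p hpP]
    · rw [if_pos rfl]
    · intro v hv hvp
      rw [if_neg]
      intro h
      have hvU : v ∈ U := (Finset.mem_filter.mp hv).1
      have hin : v ∈ U.erase p := Finset.mem_erase.mpr ⟨hvp, hvU⟩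
      rw [h] at hin
      exact (Finset.notMem_erase v U) hin
  have hzq : z (U.erase q) = 0 := by
    show (∑ v ∈ P, if U.erase q = U.erase v
        then eps (srRing k K) v (U.erase v) * x v else 0) = 0
    refine Finset.sum_eq_zero fun v hv => ?_
    rw [if_neg]
    intro h
    by_cases hvq : v = q
    · exact hqP (hvq ▸ hv)
    · have hvU : v ∈ U := (Finset.mem_filter.mp hv).1
      have hin : v ∈ U.erase q := Finset.mem_erase.mpr ⟨hvq, hvU⟩
      rw [h] at hin
      exact (Finset.notMem_erase v U) hin
  -- lift the p-equation to the polynomial ring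
  have hEp := heval p hpU
  rw [hzp] at hEp
  have hEq := heval q hqU
  rw [hzq] at hEq
  set Pp : MvPolynomial V k :=
    (eps (MvPolynomial V k) p (U.erase p) * X p) -
      ((eps (MvPolynomial V k) p (U.erase p) * X p * W U)
        + ∑ u ∈ J, eps (MvPolynomial V k) u (U.erase p) * X u * W (insert u (U.erase p))) with hPp
  have hmkPp : Ideal.Quotient.mk (srIdeal k K) Pp = 0 := by
    rw [hPp, map_sub, map_add, map_sum, map_mul, eps_hom]
    have h1 : ∀ u ∈ J, Ideal.Quotient.mk (srIdeal k K)
        (eps (MvPolynomial V k) u (U.erase p) * X u * W (insert u (U.erase p)))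
        = (eps (srRing k K) u (U.erase p) * x u) * w (insert u (U.erase p)) := by
      intro u _
      rw [map_mul, map_mul, eps_hom, hW]
    rw [Finset.sum_congr rfl h1, map_mul, map_mul, eps_hom, hW]
    rw [← sub_eq_zero] at hEp
    rw [← hEp]
  have hmkPq : Ideal.Quotient.mk (srIdeal k K)
      ((eps (MvPolynomial V k) q (U.erase q) * X q * W U)
        + ∑ u ∈ J, eps (MvPolynomial V k) u (U.erase q) * X u * W (insert u (U.erase q))) = 0 := by
    rw [map_add, map_sum, map_mul, map_mul, eps_hom, hW]
    have h1 : ∀ u ∈ J, Ideal.Quotient.mk (srIdeal k K)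
        (eps (MvPolynomial V k) u (U.erase q) * X u * W (insert u (U.erase q)))
        = (eps (srRing k K) u (U.erase q) * x u) * w (insert u (U.erase q)) := by
      intro u _
      rw [map_mul, map_mul, eps_hom, hW]
    rw [Finset.sum_congr rfl h1, ← hEq]
  -- coefficient extraction at X_p
  have hcp := coeff_srIdeal k K (Ideal.Quotient.eq_zero_iff_mem.mp hmkPp)
    (Finsupp.single p 1)
    (by rw [Finsupp.support_single_ne_zero p one_ne_zero]; exact hpf)
  rw [hPp, coeff_sub, coeff_add, MvPolynomial.coeff_sum] at hcp
  rw [← eps_hom (C : k →+* MvPolynomial V k), coeff_C_mul, MvPolynomial.coeff_X] at hcp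
  rw [mul_assoc, coeff_C_mul, coeff_single_X_mul_self] at hcp
  have hJ0 : ∀ u ∈ J, coeff (Finsupp.single p 1)
      (eps (MvPolynomial V k) u (U.erase p) * X u * W (insert u (U.erase p))) = 0 := by
    intro u hu
    rw [← eps_hom (C : k →+* MvPolynomial V k), mul_assoc, coeff_C_mul,
      coeff_single_X_mul k p u _ (fun h => hpJ (h ▸ hu)), mul_zero]
  rw [Finset.sum_congr rfl hJ0, Finset.sum_const_zero, add_zero] at hcp
  -- coefficient extraction at X_q
  have hcq := coeff_srIdeal k K (Ideal.Quotient.eq_zero_iff_mem.mp hmkPq)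
    (Finsupp.single q 1)
    (by rw [Finsupp.support_single_ne_zero q one_ne_zero]; exact hqf)
  rw [coeff_add, MvPolynomial.coeff_sum] at hcq
  rw [mul_assoc, ← eps_hom (C : k →+* MvPolynomial V k), coeff_C_mul,
    coeff_single_X_mul_self] at hcq
  have hJ0q : ∀ u ∈ J, coeff (Finsupp.single q 1)
      (eps (MvPolynomial V k) u (U.erase q) * X u * W (insert u (U.erase q))) = 0 := by
    intro u hu
    rw [← eps_hom (C : k →+* MvPolynomial V k), mul_assoc, coeff_C_mul,
      coeff_single_X_mul k q u _ (fun h => hqJ (h ▸ hu)), mul_zero]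
  rw [Finset.sum_congr rfl hJ0q, Finset.sum_const_zero, add_zero] at hcq
  -- hcp : eps * 1 - eps * coeff 0 (W U) = 0 ; hcq : eps * coeff 0 (W U) = 0
  have hene : eps k p (U.erase p) ≠ 0 := by
    rw [eps]
    exact pow_ne_zero _ (neg_ne_zero.mpr one_ne_zero)
  have heneq : eps k q (U.erase q) ≠ 0 := by
    rw [eps]
    exact pow_ne_zero _ (neg_ne_zero.mpr one_ne_zero)
  have hc0 : coeff 0 (W U) = 0 := by
    rcases mul_eq_zero.mp hcq with h | h
    · exact absurd h heneq
    · exact h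
  rw [hc0, mul_zero, if_pos rfl, mul_one, sub_zero] at hcp
  exact hene hcp

end SRPart

end DepthAux


open SComplex in
/-- If `t = depth k[Δ]`, then the `1`-skeleton of `Δ` is a `(t-1)`-connected
graph: removing at most `t - 2` vertices leaves the induced subcomplex
connected. -/
theorem oneSkeleton_connected_of_depth
    {V : Type} [Fintype V] [DecidableEq V] (k : Type) [Field k]
    (K : SComplex V) (t : ℕ) (ht : t = srDepth k K)
    (J : Finset V) (hJv : ∀ v ∈ J, ({v} : Finset V) ∈ K.faces)
    (hJcard : (J.card : ℤ) ≤ (t : ℤ) - 2) :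
    Conn (K.restrict (↑J : Set V)ᶜ) := by
  classical
  have ht2 : J.card + 2 ≤ t := by omega
  set A : Set ℕ := {n | ∃ rs : List (SComplex.srRing k K), rs.length = n ∧
    (∀ r ∈ rs, r ∈ Ideal.span (Set.range fun v : V =>
      Ideal.Quotient.mk (SComplex.srIdeal k K) (MvPolynomial.X v))) ∧
    RingTheory.Sequence.IsRegular (SComplex.srRing k K) rs} with hA
  have hts : t = sSup A := ht
  have htA : t ∈ A := by
    by_cases hbdd : A.Nonempty ∧ BddAbove A
    · rw [hts]
      exact Nat.sSup_mem hbdd.1 hbdd.2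
    · exfalso
      have h0 : sSup A = 0 := by
        rcases not_and_or.mp hbdd with h | h
        · rw [Set.not_nonempty_iff_eq_empty.mp h, csSup_empty]
          rfl
        · rw [csSup_of_not_bddAbove h, csSup_empty]
          rfl
      rw [hts, h0] at ht2
      omega
  obtain ⟨rs, hlen, hmem, hreg⟩ := htA
  constructor
  · by_contra hno
    push_neg at hno
    have hJ' : ∀ v, v ∉ J → ({v} : Finset V) ∉ K.faces := by
      intro v hv hface
      refine hno v ⟨hface, ?_⟩
      intro w hw
      simp only [Finset.coe_singleton, Set.mem_singleton_iff] at hw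
      subst hw
      simpa using hv
    have hle := DepthAux.lemE k K J hJ' rs hmem hreg.toIsWeaklyRegular
    omega
  · intro a b ha hb
    by_contra hpath
    have haJ : a ∉ J := by
      have := ha.2 (by simp : a ∈ (↑({a} : Finset V) : Set V))
      simpa using this
    have hbJ : b ∉ J := by
      have := hb.2 (by simp : b ∈ (↑({b} : Finset V) : Set V))
      simpa using this
    have hle := DepthAux.lemD k K J a b haJ hbJ ha.1 hb.1 hpath rs hmem
      hreg.toIsWeaklyRegular
    omega
end
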